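/- arXiv:2303.08468 — 4 statements merged into one kernel-verified Lean document; each statement's English description precedes it below -/
import Mathlib

section
/- Let n = p^m where p is a prime and m > 2 is a positive integer. Then the adjacency spectrum of the essential ideal graph E_{Z_n} consists of the eigenvalue m-2 with multiplicity 1 and the eigenvalue -1 with multiplicity m-2; equivalently, the characteristic polynomial of the adjacency matrix of E_{Z_n} is (λ - (m-2))(λ + 1)^{m-2}. -/
open Polynomial

/-- An ideal `I` of a commutative ring is *essential* if it has nonzero intersection
with every nonzero ideal. -/
def IsEssentialIdeal {R : Type*} [CommRing R] (I : Ideal R) : Prop :=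
  ∀ J : Ideal R, J ≠ ⊥ → I ⊓ J ≠ ⊥

/-- The essential ideal graph of a commutative ring `R`: its vertices are the nonzero
proper ideals of `R`, and two distinct vertices `I`, `K` are adjacent iff `I + K` is an
essential ideal of `R`. -/
def essentialIdealGraph (R : Type*) [CommRing R] :
    SimpleGraph {I : Ideal R // I ≠ ⊥ ∧ I ≠ ⊤} where
  Adj I K := I ≠ K ∧ IsEssentialIdeal (I.1 ⊔ K.1)
  symm := ⟨by
    rintro I K ⟨hne, hess⟩
    exact ⟨hne.symm, by rwa [sup_comm]⟩⟩
  loopless := ⟨fun I h => h.1 rfl⟩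

/-- The vertex set of the essential ideal graph of `ZMod n`. -/
abbrev EssVert (n : ℕ) : Type := {I : Ideal (ZMod n) // I ≠ ⊥ ∧ I ≠ ⊤}

noncomputable instance (n : ℕ) [NeZero n] : Fintype (EssVert n) := by
  have : Finite (Ideal (ZMod n)) :=
    Finite.of_injective (fun I => (I : Set (ZMod n))) SetLike.coe_injective
  exact Fintype.ofFinite _

noncomputable instance (n : ℕ) : DecidableEq (EssVert n) := Classical.decEq _

open Classical in
/-- The adjacency matrix (with real entries) of the essential ideal graph of `ZMod n`. -/
noncomputable def essAdjMatrix (n : ℕ) [NeZero n] :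
    Matrix (EssVert n) (EssVert n) ℝ :=
  Matrix.of fun I K => if (essentialIdealGraph (ZMod n)).Adj I K then 1 else 0

open Matrix in
set_option synthInstance.maxHeartbeats 1000000 in
set_option maxHeartbeats 1000000 in
/-- The characteristic polynomial of the adjacency matrix of a complete graph. -/
lemma charpoly_complete_aux {ι : Type*} [Fintype ι] [DecidableEq ι] [Nonempty ι]
    (A : Matrix ι ι ℝ) (hA : ∀ i j, A i j = if i = j then 0 else 1) :
    A.charpoly = (X - C ((Fintype.card ι : ℝ) - 1)) * (X + 1) ^ (Fintype.card ι - 1) := by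
  obtain ⟨d, hd⟩ : ∃ d, Fintype.card ι = d + 1 :=
    ⟨Fintype.card ι - 1, (Nat.succ_pred_eq_of_pos Fintype.card_pos).symm⟩
  rw [hd]
  have hcast : ((d + 1 : ℕ) : ℝ) - 1 = ((d : ℕ) : ℝ) := by push_cast; ring
  apply RatFunc.algebraMap_injective ℝ
  set φ := algebraMap ℝ[X] (RatFunc ℝ) with hφ
  set t : RatFunc ℝ := φ (X + 1) with ht
  have htne : t ≠ 0 := by
    rw [ht]
    intro h
    have h2 : (X + 1 : ℝ[X]) = 0 := RatFunc.algebraMap_injective ℝ (h.trans (map_zero φ).symm)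
    simpa using congrArg (Polynomial.eval 0) h2
  have hφX : φ X = t - 1 := by rw [ht, map_add, _root_.map_one]; ring
  have hM : (Matrix.charmatrix A).map φ =
      t • ((1 : Matrix ι ι (RatFunc ℝ)) +
        replicateCol Unit (fun _ => -t⁻¹) * replicateRow Unit (fun _ => (1 : RatFunc ℝ))) := by
    ext i j
    rw [Matrix.map_apply, Matrix.smul_apply, Matrix.add_apply, Matrix.mul_apply]
    simp only [Matrix.replicateCol_apply, Matrix.replicateRow_apply, Finset.univ_unique, Finset.sum_const,
      Finset.card_singleton, one_smul, mul_one]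
    by_cases h : i = j
    · subst h
      rw [charmatrix_apply_eq, Matrix.one_apply_eq, map_sub, hA, if_pos rfl, Polynomial.C_0,
        map_zero, hφX]
      rw [smul_eq_mul, mul_add, mul_neg, mul_inv_cancel₀ htne]
      ring
    · rw [charmatrix_apply_ne _ _ _ h, Matrix.one_apply_ne h, hA, if_neg h, map_neg,
        _root_.map_one, smul_eq_mul]
      simp [mul_inv_cancel₀ htne]
  rw [Matrix.charpoly, RingHom.map_det, RingHom.mapMatrix_apply, hM, Matrix.det_smul,
    Matrix.det_one_add_replicateCol_mul_replicateRow]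
  simp only [dotProduct, Finset.sum_const, Finset.card_univ, nsmul_eq_mul, mul_neg,
    mul_one, hd]
  rw [_root_.map_mul, map_sub, map_pow, hφX, hcast, Polynomial.C_eq_natCast, map_natCast,
    pow_succ, Nat.add_sub_cancel]
  field_simp
  rw [← ht]; push_cast
  ring

variable {p m : ℕ}

lemma pPow_ne_zero (hp : p.Prime) {k : ℕ} (hk : k < m) :
    ((p : ZMod (p ^ m))) ^ k ≠ 0 := by
  haveI : NeZero (p ^ m) := ⟨pow_ne_zero _ hp.pos.ne'⟩
  intro h
  rw [← Nat.cast_pow, ZMod.natCast_eq_zero_iff] at h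
  have := (Nat.pow_dvd_pow_iff_le_right hp.one_lt).mp h
  omega

lemma pPow_le_of_mem_span (hp : p.Prime) {i j : ℕ} (hj : j ≤ m)
    (h : ((p : ZMod (p ^ m))) ^ i ∈ Ideal.span {((p : ZMod (p ^ m))) ^ j}) : j ≤ i := by
  rw [Ideal.mem_span_singleton] at h
  obtain ⟨c, hc⟩ := h
  have hm0 : ((p : ZMod (p ^ m))) ^ m = 0 := by
    rw [← Nat.cast_pow, ZMod.natCast_self]
  have h0 : ((p : ZMod (p ^ m))) ^ (m - j + i) = 0 := by
    rw [pow_add, hc, ← mul_assoc, ← pow_add, Nat.sub_add_cancel hj, hm0, zero_mul]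
  by_contra hji
  exact pPow_ne_zero hp (by omega) h0

lemma span_eq_span_pPow (hp : p.Prime) {a : ZMod (p ^ m)} (ha : a ≠ 0) :
    ∃ k < m, Ideal.span {a} = Ideal.span {((p : ZMod (p ^ m))) ^ k} := by
  haveI : NeZero (p ^ m) := ⟨pow_ne_zero _ hp.pos.ne'⟩
  have hv0 : a.val ≠ 0 := by simpa [ZMod.val_eq_zero] using ha
  have hvlt : a.val < p ^ m := ZMod.val_lt a
  obtain ⟨k, c, hc, hv⟩ := Nat.exists_eq_pow_mul_and_not_dvd hv0 p hp.ne_one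
  have hk : k < m := by
    have h1 : p ^ k ≤ a.val := Nat.le_of_dvd (Nat.pos_of_ne_zero hv0) ⟨c, hv⟩
    exact (Nat.pow_lt_pow_iff_right hp.one_lt).mp (lt_of_le_of_lt h1 hvlt)
  have hu : IsUnit ((c : ZMod (p ^ m))) := by
    rw [ZMod.isUnit_iff_coprime]
    exact Nat.Coprime.pow_right _ ((Nat.Prime.coprime_iff_not_dvd hp).mpr hc).symm
  have ha' : a = ((p : ZMod (p ^ m))) ^ k * (c : ZMod (p ^ m)) := by
    have h2 : ((a.val : ℕ) : ZMod (p ^ m)) = a := ZMod.natCast_rightInverse a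
    rw [← h2, hv]
    push_cast
    ring
  exact ⟨k, hk, by rw [ha', Ideal.span_singleton_mul_right_unit hu]⟩

lemma essential_of_ne_bot (hp : p.Prime) (hm : 0 < m) {I : Ideal (ZMod (p ^ m))} (hI : I ≠ ⊥) :
    IsEssentialIdeal I := by
  intro J hJ
  obtain ⟨a, haI, ha⟩ := Submodule.exists_mem_ne_zero_of_ne_bot hI
  obtain ⟨b, hbJ, hb⟩ := Submodule.exists_mem_ne_zero_of_ne_bot hJ
  obtain ⟨i, hi, hia⟩ := span_eq_span_pPow hp ha
  obtain ⟨j, hj, hjb⟩ := span_eq_span_pPow hp hb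
  set q : ZMod (p ^ m) := ((p : ZMod (p ^ m))) ^ max i j with hq
  have hqI : q ∈ I := by
    have h1 : q ∈ Ideal.span {((p : ZMod (p ^ m))) ^ i} :=
      Ideal.mem_span_singleton.mpr (pow_dvd_pow _ (le_max_left i j))
    rw [← hia] at h1
    exact ((Ideal.span_singleton_le_iff_mem I).mpr haI) h1
  have hqJ : q ∈ J := by
    have h1 : q ∈ Ideal.span {((p : ZMod (p ^ m))) ^ j} :=
      Ideal.mem_span_singleton.mpr (pow_dvd_pow _ (le_max_right i j))
    rw [← hjb] at h1
    exact ((Ideal.span_singleton_le_iff_mem J).mpr hbJ) h1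
  intro hbot
  have hq0 : q ≠ 0 := pPow_ne_zero hp (by omega)
  exact hq0 (by simpa [hbot] using (Submodule.mem_inf.mpr ⟨hqI, hqJ⟩ : _ ∈ I ⊓ J))

lemma card_essVert (hp : p.Prime) (hm : 0 < m) [NeZero (p ^ m)] :
    Fintype.card (EssVert (p ^ m)) = m - 1 := by
  have hbij : Function.Bijective (fun k : Fin (m - 1) =>
      (⟨Ideal.span {((p : ZMod (p ^ m))) ^ ((k : ℕ) + 1)}, by
        rw [Ne, Ideal.span_singleton_eq_bot]
        exact pPow_ne_zero hp (by omega), by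
        rw [Ne, Ideal.span_singleton_eq_top]
        intro hu
        have hup : IsUnit ((p : ZMod (p ^ m))) := by
          rw [pow_succ] at hu
          exact isUnit_of_mul_isUnit_right hu
        rw [ZMod.isUnit_iff_coprime] at hup
        have : p ∣ 1 := hup ▸ Nat.dvd_gcd dvd_rfl (dvd_pow_self p hm.ne')
        exact hp.one_lt.ne' (Nat.dvd_one.mp this)⟩ : EssVert (p ^ m))) := by
    constructor
    · intro k₁ k₂ hk
      have hsp : Ideal.span {((p : ZMod (p ^ m))) ^ ((k₁ : ℕ) + 1)} =
          Ideal.span {((p : ZMod (p ^ m))) ^ ((k₂ : ℕ) + 1)} := congrArg Subtype.val hk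
      have h₁ : (k₂ : ℕ) + 1 ≤ (k₁ : ℕ) + 1 :=
        pPow_le_of_mem_span hp (show (k₂ : ℕ) + 1 ≤ m by have := k₂.isLt; omega)
          (hsp ▸ Ideal.mem_span_singleton_self _)
      have h₂ : (k₁ : ℕ) + 1 ≤ (k₂ : ℕ) + 1 :=
        pPow_le_of_mem_span hp (show (k₁ : ℕ) + 1 ≤ m by have := k₁.isLt; omega)
          (hsp ▸ Ideal.mem_span_singleton_self _)
      exact Fin.ext (by omega)
    · rintro ⟨I, hb, ht⟩
      haveI : IsPrincipalIdealRing (ZMod (p ^ m)) :=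
        IsPrincipalIdealRing.of_surjective (Int.castRingHom (ZMod (p ^ m)))
          ZMod.intCast_surjective
      obtain ⟨a, ha⟩ := (IsPrincipalIdealRing.principal I).principal
      rw [Ideal.submodule_span_eq] at ha
      have ha0 : a ≠ 0 := by
        intro h0
        exact hb (by rw [ha, h0, Ideal.span_singleton_eq_bot])
      obtain ⟨k, hk, hspan⟩ := span_eq_span_pPow hp ha0
      have hk0 : k ≠ 0 := by
        intro h0
        apply ht
        rw [ha, hspan, h0, pow_zero, Ideal.span_singleton_one]
      refine ⟨⟨k - 1, by omega⟩, ?_⟩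
      apply Subtype.ext
      show Ideal.span {((p : ZMod (p ^ m))) ^ ((k - 1 : ℕ) + 1)} = I
      have hkk : (k - 1 : ℕ) + 1 = k := by omega
      rw [hkk, ha, hspan]
  rw [← Fintype.card_of_bijective hbij, Fintype.card_fin]

/-- For `n = p ^ m` with `p` prime and `m > 2`, the characteristic polynomial of the
adjacency matrix of the essential ideal graph of `ZMod n` is
`(λ - (m - 2)) * (λ + 1) ^ (m - 2)`; that is, the adjacency spectrum consists of the
eigenvalue `m - 2` with multiplicity `1` and the eigenvalue `-1` with multiplicity `m - 2`. -/
theorem charpoly_essentialIdealGraph_primePow (p m n : ℕ) (hp : p.Prime) (hm : 2 < m)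
    (hn : n = p ^ m) [NeZero n] :
    (essAdjMatrix n).charpoly = (X - C ((m : ℝ) - 2)) * (X + 1) ^ (m - 2) := by
  subst hn
  have hcard : Fintype.card (EssVert (p ^ m)) = m - 1 := card_essVert hp (by omega)
  haveI : Nonempty (EssVert (p ^ m)) := Fintype.card_pos_iff.mp (by omega)
  have hA : ∀ I K : EssVert (p ^ m),
      essAdjMatrix (p ^ m) I K = if I = K then 0 else 1 := by
    intro I K
    classical
    show (if (essentialIdealGraph (ZMod (p ^ m))).Adj I K then (1 : ℝ) else 0) = _
    by_cases h : (essentialIdealGraph (ZMod (p ^ m))).Adj I K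
    · rw [if_pos h, if_neg (show I ≠ K ∧ _ from h).1]
    · rw [if_neg h, if_pos]
      by_contra hIK
      apply h
      refine (show I ≠ K ∧ IsEssentialIdeal (I.1 ⊔ K.1) from ⟨hIK, essential_of_ne_bot hp (by omega) ?_⟩)
      intro hsup
      have hle : I.1 ≤ I.1 ⊔ K.1 := le_sup_left
      rw [hsup, le_bot_iff] at hle
      exact I.2.1 hle
  rw [charpoly_complete_aux _ hA, hcard]
  have h1 : ((m - 1 : ℕ) : ℝ) - 1 = (m : ℝ) - 2 := by
    rw [Nat.cast_sub (by omega)]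
    push_cast
    ring
  have h2 : m - 1 - 1 = m - 2 := by omega
  rw [h1, h2]
end

section
/- Let n = p^{m_1} q^{m_2}, where p and q are distinct primes with p < q and m_1, m_2 are positive integers. Partition the nonzero proper ideals of Z_n into X = {⟨p^r q^s⟩ : 0 ≤ r ≤ m_1 - 1, 0 ≤ s ≤ m_2 - 1, (r,s) ≠ (0,0)}, V_1 = {⟨p^{m_1} q^s⟩ : 0 ≤ s ≤ m_2 - 1}, and V_2 = {⟨p^r q^{m_2}⟩ : 0 ≤ r ≤ m_1 - 1}. Then in the essential ideal graph E_{Z_n}: every vertex of X is adjacent to every other vertex; no two vertices within V_1 are adjacent; no two vertices within V_2 are adjacent; and every vertex of V_1 is adjacent to every vertex of V_2. That is, E_{Z_n} is isomorphic to the join K_{m_1 m_2 - 1} ∨ K_{m_2, m_1} of a complete graph on m_1 m_2 - 1 vertices with a complete bipartite graph with parts of sizes m_2 and m_1. -/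
set_option linter.unusedSectionVars false
set_option maxHeartbeats 1000000

open Polynomial

/-- The join `G ∨ H` of two graphs: their disjoint union together with all edges
between vertices of `G` and vertices of `H`. -/
def SimpleGraph.graphJoin {α β : Type*} (G : SimpleGraph α) (H : SimpleGraph β) :
    SimpleGraph (α ⊕ β) where
  Adj x y :=
    match x, y with
    | Sum.inl a, Sum.inl b => G.Adj a b
    | Sum.inr a, Sum.inr b => H.Adj a b
    | Sum.inl _, Sum.inr _ => True
    | Sum.inr _, Sum.inl _ => True
  symm := ⟨by
    rintro (a | a) (b | b) h
    · exact G.adj_symm h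
    · trivial
    · trivial
    · exact H.adj_symm h⟩
  loopless := ⟨by
    rintro (a | a) h
    · exact G.irrefl h
    · exact H.irrefl h⟩

section ZModHelpers
variable {n : ℕ} [NeZero n]

private lemma zmod_cast_dvd_iff (a c : ℕ) :
    (a : ZMod n) ∣ (c : ZMod n) ↔ Nat.gcd a n ∣ c := by
  constructor
  · rintro ⟨s, hs⟩
    have h1 : ((c : ℤ) : ZMod n) = (((a * s.val : ℕ) : ℤ) : ZMod n) := by
      push_cast
      rw [ZMod.natCast_zmod_val]
      exact hs
    rw [ZMod.intCast_eq_intCast_iff_dvd_sub] at h1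
    obtain ⟨k, hk⟩ := h1
    have hg : (Nat.gcd a n : ℤ) ∣ (c : ℤ) := by
      have hc : (c : ℤ) = (a : ℤ) * s.val - n * k := by push_cast at hk ⊢; linarith
      rw [hc]
      exact dvd_sub ((Int.natCast_dvd_natCast.mpr (Nat.gcd_dvd_left a n)).mul_right _)
        ((Int.natCast_dvd_natCast.mpr (Nat.gcd_dvd_right a n)).mul_right _)
    exact_mod_cast hg
  · rintro ⟨t, ht⟩
    refine ⟨(t : ZMod n) * ((Nat.gcdA a n : ℤ) : ZMod n), ?_⟩
    have hga : ((Nat.gcd a n : ℕ) : ZMod n) = (a : ZMod n) * ((Nat.gcdA a n : ℤ) : ZMod n) := by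
      have h2 : (((Nat.gcd a n : ℕ) : ℤ) : ZMod n)
          = (((a : ℤ) * Nat.gcdA a n + (n : ℤ) * Nat.gcdB a n : ℤ) : ZMod n) := by
        rw [← Nat.gcd_eq_gcd_ab]
      push_cast at h2
      simpa [ZMod.natCast_self] using h2
    rw [ht]
    push_cast
    rw [hga]
    ring

private lemma span_bot_iff (d : ℕ) :
    Ideal.span {(d : ZMod n)} = ⊥ ↔ n ∣ d := by
  rw [Ideal.span_singleton_eq_bot, ZMod.natCast_eq_zero_iff]

private lemma span_top_iff (d : ℕ) :
    Ideal.span {(d : ZMod n)} = ⊤ ↔ Nat.gcd d n = 1 := by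
  rw [Ideal.span_singleton_eq_top, isUnit_iff_dvd_one, ← Nat.cast_one,
    zmod_cast_dvd_iff, Nat.dvd_one]

private lemma span_sup (a b : ℕ) :
    Ideal.span {(a : ZMod n)} ⊔ Ideal.span {(b : ZMod n)}
      = Ideal.span {((Nat.gcd a b : ℕ) : ZMod n)} := by
  rw [← Ideal.span_insert]
  apply le_antisymm
  · rw [Ideal.span_le]
    rintro x (rfl | rfl) <;> rw [SetLike.mem_coe, Ideal.mem_span_singleton]
    · exact Nat.cast_dvd_cast (Nat.gcd_dvd_left a b)
    · exact Nat.cast_dvd_cast (Nat.gcd_dvd_right a b)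
  · rw [Ideal.span_le, Set.singleton_subset_iff, SetLike.mem_coe, Ideal.mem_span_pair]
    refine ⟨((Nat.gcdA a b : ℤ) : ZMod n), ((Nat.gcdB a b : ℤ) : ZMod n), ?_⟩
    have h2 : (((Nat.gcd a b : ℕ) : ℤ) : ZMod n)
        = (((a : ℤ) * Nat.gcdA a b + (b : ℤ) * Nat.gcdB a b : ℤ) : ZMod n) := by
      rw [← Nat.gcd_eq_gcd_ab]
    push_cast at h2 ⊢
    rw [h2]; ring

private lemma span_inf {a b : ℕ} (ha : a ∣ n) (hb : b ∣ n) :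
    Ideal.span {(a : ZMod n)} ⊓ Ideal.span {(b : ZMod n)}
      = Ideal.span {((Nat.lcm a b : ℕ) : ZMod n)} := by
  apply le_antisymm
  · intro x hx
    obtain ⟨h1, h2⟩ := hx
    rw [SetLike.mem_coe, Ideal.mem_span_singleton] at h1 h2
    rw [Ideal.mem_span_singleton]
    rw [← ZMod.natCast_zmod_val x] at h1 h2 ⊢
    rw [zmod_cast_dvd_iff, Nat.gcd_eq_left ha] at h1
    rw [zmod_cast_dvd_iff, Nat.gcd_eq_left hb] at h2
    rw [zmod_cast_dvd_iff, Nat.gcd_eq_left (Nat.lcm_dvd ha hb)]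
    exact Nat.lcm_dvd h1 h2
  · rw [le_inf_iff]
    constructor <;> rw [Ideal.span_singleton_le_span_singleton]
    · exact Nat.cast_dvd_cast (Nat.dvd_lcm_left a b)
    · exact Nat.cast_dvd_cast (Nat.dvd_lcm_right a b)

private lemma span_inj {a b : ℕ} (ha : a ∣ n) (hb : b ∣ n)
    (h : Ideal.span {(a : ZMod n)} = Ideal.span {(b : ZMod n)}) : a = b := by
  have h1 : (b : ZMod n) ∣ (a : ZMod n) :=
    Ideal.span_singleton_le_span_singleton.mp h.le
  have h2 : (a : ZMod n) ∣ (b : ZMod n) :=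
    Ideal.span_singleton_le_span_singleton.mp h.ge
  rw [zmod_cast_dvd_iff, Nat.gcd_eq_left hb] at h1
  rw [zmod_cast_dvd_iff, Nat.gcd_eq_left ha] at h2
  exact Nat.dvd_antisymm h2 h1

private lemma exists_span_dvd (I : Ideal (ZMod n)) :
    ∃ d, d ∣ n ∧ I = Ideal.span {(d : ZMod n)} := by
  haveI : IsPrincipalIdealRing (ZMod n) :=
    IsPrincipalIdealRing.of_surjective (Int.castRingHom (ZMod n)) ZMod.intCast_surjective
  obtain ⟨x, hx⟩ := (IsPrincipalIdealRing.principal I)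
  refine ⟨Nat.gcd x.val n, Nat.gcd_dvd_right _ _, ?_⟩
  have hxv : I = Ideal.span {((x.val : ℕ) : ZMod n)} := by
    rw [hx, ZMod.natCast_zmod_val]
  rw [hxv]
  apply le_antisymm <;> rw [Ideal.span_singleton_le_span_singleton, zmod_cast_dvd_iff]
  exact (Nat.gcd_dvd_left _ _).trans (Nat.gcd_dvd_left _ _)

end ZModHelpers

section PrimeHelpers
variable {p q m₁ m₂ n : ℕ}

private lemma fact_p (hp : p.Prime) (hq : q.Prime) (hne : p ≠ q) (r s : ℕ) :
    (p ^ r * q ^ s).factorization p = r := by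
  rw [Nat.factorization_mul (pow_ne_zero _ hp.pos.ne') (pow_ne_zero _ hq.pos.ne'),
    hp.factorization_pow, hq.factorization_pow]
  simp [Finsupp.single_apply, hne, hne.symm]

private lemma fact_q (hp : p.Prime) (hq : q.Prime) (hne : p ≠ q) (r s : ℕ) :
    (p ^ r * q ^ s).factorization q = s := by
  rw [Nat.factorization_mul (pow_ne_zero _ hp.pos.ne') (pow_ne_zero _ hq.pos.ne'),
    hp.factorization_pow, hq.factorization_pow]
  simp [Finsupp.single_apply, hne, hne.symm]

private lemma pq_inj (hp : p.Prime) (hq : q.Prime) (hne : p ≠ q) {r s r' s' : ℕ}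
    (h : p ^ r * q ^ s = p ^ r' * q ^ s') : r = r' ∧ s = s' := by
  constructor
  · have := congrArg (fun m => m.factorization p) h
    simpa [fact_p hp hq hne] using this
  · have := congrArg (fun m => m.factorization q) h
    simpa [fact_q hp hq hne] using this

private lemma ess_mono {R : Type*} [CommRing R] {I I' : Ideal R} (h : I ≤ I')
    (he : IsEssentialIdeal I) : IsEssentialIdeal I' := by
  intro J hJ hbot
  exact he J hJ (le_bot_iff.mp (hbot ▸ inf_le_inf_right J h))

private lemma ess_of (hp : p.Prime) (hq : q.Prime) (hne : p ≠ q)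
    (hn : n = p ^ m₁ * q ^ m₂) [NeZero n] {d : ℕ} (hd : d ∣ n)
    (hdp : ¬ p ^ m₁ ∣ d) (hdq : ¬ q ^ m₂ ∣ d) :
    IsEssentialIdeal (Ideal.span {(d : ZMod n)}) := by
  intro J hJ
  obtain ⟨e, he, rfl⟩ := exists_span_dvd J
  have hn0 : n ≠ 0 := NeZero.ne n
  have hd0 : d ≠ 0 := fun h => hn0 (zero_dvd_iff.mp (h ▸ hd))
  have he0 : e ≠ 0 := fun h => hn0 (zero_dvd_iff.mp (h ▸ he))
  have hen : e ≠ n := fun h => hJ ((span_bot_iff e).mpr (h ▸ dvd_rfl))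
  rw [span_inf hd he, Ne, span_bot_iff]
  intro hlcm
  have hl0 : Nat.lcm d e ≠ 0 := Nat.lcm_ne_zero hd0 he0
  have hpe : p ^ m₁ ∣ e := by
    have h1 : p ^ m₁ ∣ Nat.lcm d e := dvd_trans ⟨q ^ m₂, hn⟩ hlcm
    rw [hp.pow_dvd_iff_le_factorization hl0, Nat.factorization_lcm hd0 he0,
      Finsupp.sup_apply] at h1
    rw [hp.pow_dvd_iff_le_factorization hd0] at hdp
    rw [hp.pow_dvd_iff_le_factorization he0]
    omega
  have hqe : q ^ m₂ ∣ e := by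
    have h1 : q ^ m₂ ∣ Nat.lcm d e := dvd_trans ⟨p ^ m₁, by rw [hn]; ring⟩ hlcm
    rw [hq.pow_dvd_iff_le_factorization hl0, Nat.factorization_lcm hd0 he0,
      Finsupp.sup_apply] at h1
    rw [hq.pow_dvd_iff_le_factorization hd0] at hdq
    rw [hq.pow_dvd_iff_le_factorization he0]
    omega
  have hne' : n ∣ e := by
    rw [hn]
    exact (Nat.Coprime.pow _ _ ((Nat.coprime_primes hp hq).mpr hne)).mul_dvd_of_dvd_of_dvd hpe hqe
  exact hen (Nat.dvd_antisymm he hne')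

private lemma noness (hp : p.Prime) (hq : q.Prime) (hne : p ≠ q) (hm₁ : 0 < m₁)
    (hn : n = p ^ m₁ * q ^ m₂) [NeZero n] {d : ℕ} (hd : d ∣ n) (hdp : p ^ m₁ ∣ d) :
    ¬ IsEssentialIdeal (Ideal.span {(d : ZMod n)}) := by
  intro h
  have hqn : (q ^ m₂ : ℕ) ∣ n := by rw [hn]; exact dvd_mul_left _ _
  have hJ : Ideal.span {((q ^ m₂ : ℕ) : ZMod n)} ≠ ⊥ := by
    rw [Ne, span_bot_iff]
    intro hcon
    have hpn : p ∣ n := by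
      rw [hn]; exact dvd_mul_of_dvd_left (dvd_pow_self p hm₁.ne') _
    exact hne ((Nat.prime_dvd_prime_iff_eq hp hq).mp
      (hp.dvd_of_dvd_pow (hpn.trans hcon)))
  apply h _ hJ
  rw [span_inf hd hqn, span_bot_iff, hn]
  exact (Nat.Coprime.pow _ _ ((Nat.coprime_primes hp hq).mpr hne)).mul_dvd_of_dvd_of_dvd
    (hdp.trans (Nat.dvd_lcm_left _ _)) (Nat.dvd_lcm_right _ _)

private lemma vert_cond (hp : p.Prime) (hq : q.Prime) (hne : p ≠ q)
    (hn : n = p ^ m₁ * q ^ m₂) [NeZero n] {r s : ℕ}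
    (hr : r ≤ m₁) (hs : s ≤ m₂) (h0 : ¬(r = 0 ∧ s = 0)) (h1 : ¬(r = m₁ ∧ s = m₂)) :
    Ideal.span {((p ^ r * q ^ s : ℕ) : ZMod n)} ≠ ⊥
      ∧ Ideal.span {((p ^ r * q ^ s : ℕ) : ZMod n)} ≠ ⊤ := by
  have hd : (p ^ r * q ^ s : ℕ) ∣ n := by
    rw [hn]; exact mul_dvd_mul (pow_dvd_pow _ hr) (pow_dvd_pow _ hs)
  constructor
  · rw [Ne, span_bot_iff]
    intro hcon
    have heq : p ^ r * q ^ s = n := Nat.dvd_antisymm hd hcon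
    rw [hn] at heq
    exact h1 (pq_inj hp hq hne heq)
  · rw [Ne, span_top_iff, Nat.gcd_eq_left hd]
    intro hcon
    have : p ^ r * q ^ s = p ^ 0 * q ^ 0 := by simpa using hcon
    exact h0 (pq_inj hp hq hne this)

end PrimeHelpers
/-- For `n = p ^ m₁ * q ^ m₂` (`p < q` primes, `m₁, m₂ ≥ 1`), partitioning the nonzero
proper ideals of `ZMod n` into
`X  = {⟨pʳqˢ⟩ : 0 ≤ r ≤ m₁ - 1, 0 ≤ s ≤ m₂ - 1, (r,s) ≠ (0,0)}`,
`V₁ = {⟨p^{m₁} qˢ⟩ : 0 ≤ s ≤ m₂ - 1}` and `V₂ = {⟨pʳ q^{m₂}⟩ : 0 ≤ r ≤ m₁ - 1}`,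
in the essential ideal graph: every vertex of `X` is adjacent to every other vertex;
no two vertices within `V₁` are adjacent; no two vertices within `V₂` are adjacent;
every vertex of `V₁` is adjacent to every vertex of `V₂`.  Consequently the essential
ideal graph is isomorphic to the join `K_{m₁m₂-1} ∨ K_{m₂,m₁}`. -/
theorem essentialIdealGraph_two_primePows_structure (p q m₁ m₂ n : ℕ)
    (hp : p.Prime) (hq : q.Prime) (hpq : p < q)
    (hm₁ : 0 < m₁) (hm₂ : 0 < m₂) (hn : n = p ^ m₁ * q ^ m₂) :
    (∀ I K : EssVert n,
      (∃ r s : ℕ, r < m₁ ∧ s < m₂ ∧ ¬(r = 0 ∧ s = 0) ∧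
        I.1 = Ideal.span {((p ^ r * q ^ s : ℕ) : ZMod n)}) →
      I ≠ K → (essentialIdealGraph (ZMod n)).Adj I K) ∧
    (∀ I K : EssVert n,
      (∃ s : ℕ, s < m₂ ∧ I.1 = Ideal.span {((p ^ m₁ * q ^ s : ℕ) : ZMod n)}) →
      (∃ s : ℕ, s < m₂ ∧ K.1 = Ideal.span {((p ^ m₁ * q ^ s : ℕ) : ZMod n)}) →
      ¬ (essentialIdealGraph (ZMod n)).Adj I K) ∧
    (∀ I K : EssVert n,
      (∃ r : ℕ, r < m₁ ∧ I.1 = Ideal.span {((p ^ r * q ^ m₂ : ℕ) : ZMod n)}) →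
      (∃ r : ℕ, r < m₁ ∧ K.1 = Ideal.span {((p ^ r * q ^ m₂ : ℕ) : ZMod n)}) →
      ¬ (essentialIdealGraph (ZMod n)).Adj I K) ∧
    (∀ I K : EssVert n,
      (∃ s : ℕ, s < m₂ ∧ I.1 = Ideal.span {((p ^ m₁ * q ^ s : ℕ) : ZMod n)}) →
      (∃ r : ℕ, r < m₁ ∧ K.1 = Ideal.span {((p ^ r * q ^ m₂ : ℕ) : ZMod n)}) →
      (essentialIdealGraph (ZMod n)).Adj I K) ∧
    Nonempty (essentialIdealGraph (ZMod n) ≃g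
      SimpleGraph.graphJoin (⊤ : SimpleGraph (Fin (m₁ * m₂ - 1)))
        (completeBipartiteGraph (Fin m₂) (Fin m₁))) := by
  have hne : p ≠ q := hpq.ne
  have hn0 : n ≠ 0 := by
    rw [hn]
    exact Nat.mul_ne_zero (pow_ne_zero _ hp.pos.ne') (pow_ne_zero _ hq.pos.ne')
  haveI : NeZero n := ⟨hn0⟩
  have hcop : Nat.Coprime (p ^ m₁) (q ^ m₂) :=
    Nat.Coprime.pow _ _ ((Nat.coprime_primes hp hq).mpr hne)
  have hn' : n = q ^ m₂ * p ^ m₁ := by rw [hn]; ring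
  -- divisibility facts
  have hdvd : ∀ {r s : ℕ}, r ≤ m₁ → s ≤ m₂ → (p ^ r * q ^ s : ℕ) ∣ n := fun hr hs => by
    rw [hn]; exact mul_dvd_mul (pow_dvd_pow _ hr) (pow_dvd_pow _ hs)
  have hnotp : ∀ {r s : ℕ}, r < m₁ → ¬ p ^ m₁ ∣ p ^ r * q ^ s := by
    intro r s hr hcon
    rw [hp.pow_dvd_iff_le_factorization
      (Nat.mul_ne_zero (pow_ne_zero _ hp.pos.ne') (pow_ne_zero _ hq.pos.ne')),
      fact_p hp hq hne] at hcon
    omega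
  have hnotq : ∀ {r s : ℕ}, s < m₂ → ¬ q ^ m₂ ∣ p ^ r * q ^ s := by
    intro r s hs hcon
    rw [hq.pow_dvd_iff_le_factorization
      (Nat.mul_ne_zero (pow_ne_zero _ hp.pos.ne') (pow_ne_zero _ hq.pos.ne')),
      fact_q hp hq hne] at hcon
    omega
  -- Part 1
  have part1 : ∀ I K : EssVert n,
      (∃ r s : ℕ, r < m₁ ∧ s < m₂ ∧ ¬(r = 0 ∧ s = 0) ∧
        I.1 = Ideal.span {((p ^ r * q ^ s : ℕ) : ZMod n)}) →
      I ≠ K → (essentialIdealGraph (ZMod n)).Adj I K := by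
    rintro I K ⟨r, s, hr, hs, h0, hI⟩ hIK
    refine ⟨hIK, ?_⟩
    have hess : IsEssentialIdeal (Ideal.span {((p ^ r * q ^ s : ℕ) : ZMod n)}) :=
      ess_of hp hq hne hn (hdvd hr.le hs.le) (hnotp hr) (hnotq hs)
    rw [← hI] at hess
    exact ess_mono le_sup_left hess
  -- Part 2
  have part2 : ∀ I K : EssVert n,
      (∃ s : ℕ, s < m₂ ∧ I.1 = Ideal.span {((p ^ m₁ * q ^ s : ℕ) : ZMod n)}) →
      (∃ s : ℕ, s < m₂ ∧ K.1 = Ideal.span {((p ^ m₁ * q ^ s : ℕ) : ZMod n)}) →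
      ¬ (essentialIdealGraph (ZMod n)).Adj I K := by
    rintro I K ⟨s, hs, hI⟩ ⟨s', hs', hK⟩ ⟨hne', hess⟩
    rw [hI, hK, span_sup] at hess
    exact noness hp hq hne hm₁ hn ((Nat.gcd_dvd_left _ _).trans (hdvd le_rfl hs.le))
      (Nat.dvd_gcd (dvd_mul_right _ _) (dvd_mul_right _ _)) hess
  -- Part 3
  have part3 : ∀ I K : EssVert n,
      (∃ r : ℕ, r < m₁ ∧ I.1 = Ideal.span {((p ^ r * q ^ m₂ : ℕ) : ZMod n)}) →
      (∃ r : ℕ, r < m₁ ∧ K.1 = Ideal.span {((p ^ r * q ^ m₂ : ℕ) : ZMod n)}) →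
      ¬ (essentialIdealGraph (ZMod n)).Adj I K := by
    rintro I K ⟨r, hr, hI⟩ ⟨r', hr', hK⟩ ⟨hne', hess⟩
    rw [hI, hK, span_sup] at hess
    exact noness hq hp hne.symm hm₂ hn' ((Nat.gcd_dvd_left _ _).trans (hdvd hr.le le_rfl))
      (Nat.dvd_gcd (dvd_mul_left _ _) (dvd_mul_left _ _)) hess
  -- Part 4
  have part4 : ∀ I K : EssVert n,
      (∃ s : ℕ, s < m₂ ∧ I.1 = Ideal.span {((p ^ m₁ * q ^ s : ℕ) : ZMod n)}) →
      (∃ r : ℕ, r < m₁ ∧ K.1 = Ideal.span {((p ^ r * q ^ m₂ : ℕ) : ZMod n)}) →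
      (essentialIdealGraph (ZMod n)).Adj I K := by
    rintro I K ⟨s, hs, hI⟩ ⟨r, hr, hK⟩
    have hIK : I ≠ K := by
      intro h
      have heq : (p ^ m₁ * q ^ s : ℕ) = p ^ r * q ^ m₂ :=
        span_inj (hdvd le_rfl hs.le) (hdvd hr.le le_rfl) (by rw [← hI, ← hK, h])
      have := (pq_inj hp hq hne heq).1
      omega
    refine ⟨hIK, ?_⟩
    rw [hI, hK, span_sup]
    refine ess_of hp hq hne hn ((Nat.gcd_dvd_left _ _).trans (hdvd le_rfl hs.le)) ?_ ?_
    · exact fun hcon => hnotp hr (hcon.trans (Nat.gcd_dvd_right _ _))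
    · exact fun hcon => hnotq hs (hcon.trans (Nat.gcd_dvd_left _ _))
  -- Part 5 : the isomorphism
  have hcond : ∀ r s : ℕ, r ≤ m₁ → s ≤ m₂ → ¬(r = 0 ∧ s = 0) → ¬(r = m₁ ∧ s = m₂) →
      (Ideal.span {((p ^ r * q ^ s : ℕ) : ZMod n)} ≠ ⊥ ∧
       Ideal.span {((p ^ r * q ^ s : ℕ) : ZMod n)} ≠ ⊤) :=
    fun r s hr hs h0 h1 => vert_cond hp hq hne hn hr hs h0 h1
  have hkey : ∀ i : Fin (m₁ * m₂ - 1),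
      (i.1 + 1) / m₂ < m₁ ∧ (i.1 + 1) % m₂ < m₂ ∧
        ¬((i.1 + 1) / m₂ = 0 ∧ (i.1 + 1) % m₂ = 0) := by
    intro i
    have hi := i.2
    have h1 : i.1 + 1 < m₁ * m₂ := by omega
    refine ⟨(Nat.div_lt_iff_lt_mul hm₂).mpr h1, Nat.mod_lt _ hm₂, ?_⟩
    rintro ⟨hd0, hmo0⟩
    have := Nat.div_add_mod (i.1 + 1) m₂
    rw [hd0, hmo0] at this
    omega
  let F : Fin (m₁ * m₂ - 1) ⊕ (Fin m₂ ⊕ Fin m₁) → EssVert n := fun x =>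
    match x with
    | Sum.inl i =>
        ⟨Ideal.span {((p ^ ((i.1 + 1) / m₂) * q ^ ((i.1 + 1) % m₂) : ℕ) : ZMod n)},
          hcond _ _ (hkey i).1.le (hkey i).2.1.le (hkey i).2.2
            (fun h => absurd h.1 (hkey i).1.ne)⟩
    | Sum.inr (Sum.inl s) =>
        ⟨Ideal.span {((p ^ m₁ * q ^ s.1 : ℕ) : ZMod n)},
          hcond _ _ le_rfl s.2.le (fun h => absurd h.1 hm₁.ne')
            (fun h => absurd h.2 s.2.ne)⟩
    | Sum.inr (Sum.inr r) =>
        ⟨Ideal.span {((p ^ r.1 * q ^ m₂ : ℕ) : ZMod n)},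
          hcond _ _ r.2.le le_rfl (fun h => absurd h.2 hm₂.ne')
            (fun h => absurd h.1 r.2.ne)⟩
  have spaninj : ∀ {r s r' s' : ℕ}, r ≤ m₁ → s ≤ m₂ → r' ≤ m₁ → s' ≤ m₂ →
      Ideal.span {((p ^ r * q ^ s : ℕ) : ZMod n)}
        = Ideal.span {((p ^ r' * q ^ s' : ℕ) : ZMod n)} →
      r = r' ∧ s = s' := by
    intro r s r' s' hr hs hr' hs' h
    exact pq_inj hp hq hne (span_inj (hdvd hr hs) (hdvd hr' hs') h)
  have Finj : Function.Injective F := by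
    rintro (i | s | r) (j | t | u) h <;>
      have h' := congrArg Subtype.val h
    · obtain ⟨h1, h2⟩ := spaninj (hkey i).1.le (hkey i).2.1.le (hkey j).1.le (hkey j).2.1.le h'
      have hdi := Nat.div_add_mod (i.1 + 1) m₂
      have hdj := Nat.div_add_mod (j.1 + 1) m₂
      have : i.1 = j.1 := by rw [h1, h2] at hdi; omega
      exact congrArg Sum.inl (Fin.ext this)
    · obtain ⟨h1, h2⟩ := spaninj (hkey i).1.le (hkey i).2.1.le le_rfl t.2.le h'
      exact absurd h1 (hkey i).1.ne
    · obtain ⟨h1, h2⟩ := spaninj (hkey i).1.le (hkey i).2.1.le u.2.le le_rfl h'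
      exact absurd h2 (hkey i).2.1.ne
    · obtain ⟨h1, h2⟩ := spaninj le_rfl s.2.le (hkey j).1.le (hkey j).2.1.le h'
      exact absurd h1.symm (hkey j).1.ne
    · obtain ⟨h1, h2⟩ := spaninj le_rfl s.2.le le_rfl t.2.le h'
      exact congrArg (Sum.inr ∘ Sum.inl) (Fin.ext h2)
    · obtain ⟨h1, h2⟩ := spaninj le_rfl s.2.le u.2.le le_rfl h'
      exact absurd h1.symm u.2.ne
    · obtain ⟨h1, h2⟩ := spaninj r.2.le le_rfl (hkey j).1.le (hkey j).2.1.le h'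
      exact absurd h2.symm (hkey j).2.1.ne
    · obtain ⟨h1, h2⟩ := spaninj r.2.le le_rfl le_rfl t.2.le h'
      exact absurd h1 r.2.ne
    · obtain ⟨h1, h2⟩ := spaninj r.2.le le_rfl u.2.le le_rfl h'
      exact congrArg (Sum.inr ∘ Sum.inr) (Fin.ext h1)
  have Fsurj : Function.Surjective F := by
    intro I
    obtain ⟨d, hd, hId⟩ := exists_span_dvd I.1
    obtain ⟨r, s, hr, hs, rfl⟩ : ∃ r s, r ≤ m₁ ∧ s ≤ m₂ ∧ d = p ^ r * q ^ s := by
      obtain ⟨a, b, ha, hb, rfl⟩ := exists_dvd_and_dvd_of_dvd_mul (hn ▸ hd)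
      obtain ⟨r, hr, rfl⟩ := (Nat.dvd_prime_pow hp).mp ha
      obtain ⟨s, hs, rfl⟩ := (Nat.dvd_prime_pow hq).mp hb
      exact ⟨r, s, hr, hs, rfl⟩
    have h0 : ¬(r = 0 ∧ s = 0) := by
      rintro ⟨rfl, rfl⟩
      apply I.2.2
      rw [hId, span_top_iff]
      simp
    have h1 : ¬(r = m₁ ∧ s = m₂) := by
      rintro ⟨rfl, rfl⟩
      apply I.2.1
      rw [hId, span_bot_iff, hn]
    rcases eq_or_lt_of_le hr with hrm | hrm
    · have hsm : s < m₂ := lt_of_le_of_ne hs (fun h => h1 ⟨hrm, h⟩)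
      refine ⟨Sum.inr (Sum.inl ⟨s, hsm⟩), Subtype.ext ?_⟩
      show Ideal.span {((p ^ m₁ * q ^ s : ℕ) : ZMod n)} = I.1
      rw [hId, hrm]
    · rcases eq_or_lt_of_le hs with hsm | hsm
      · refine ⟨Sum.inr (Sum.inr ⟨r, hrm⟩), Subtype.ext ?_⟩
        show Ideal.span {((p ^ r * q ^ m₂ : ℕ) : ZMod n)} = I.1
        rw [hId, hsm]
      · have hk0 : m₂ * r + s ≠ 0 := by
          intro hk
          have hs0 : s = 0 := by omega
          have hr0 : r = 0 := by
            rcases Nat.mul_eq_zero.mp (by omega : m₂ * r = 0) with h' | h'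
            · omega
            · exact h'
          exact h0 ⟨hr0, hs0⟩
        have hklt : m₂ * r + s < m₁ * m₂ := by
          calc m₂ * r + s < m₂ * r + m₂ := by omega
            _ = m₂ * (r + 1) := by ring
            _ ≤ m₂ * m₁ := Nat.mul_le_mul_left _ hrm
            _ = m₁ * m₂ := mul_comm _ _
        refine ⟨Sum.inl ⟨m₂ * r + s - 1,
          Nat.sub_lt_sub_right (Nat.one_le_iff_ne_zero.mpr hk0) hklt⟩, Subtype.ext ?_⟩
        show Ideal.span {((p ^ ((m₂ * r + s - 1 + 1) / m₂) * q ^ ((m₂ * r + s - 1 + 1) % m₂) : ℕ)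
          : ZMod n)} = I.1
        have hsub : m₂ * r + s - 1 + 1 = m₂ * r + s := by omega
        rw [hsub, Nat.mul_add_div hm₂, Nat.mul_add_mod, Nat.div_eq_of_lt hsm,
          Nat.mod_eq_of_lt hsm, add_zero, hId]
  have Fne : ∀ x y, x ≠ y → F x ≠ F y := fun _ _ hxy h => hxy (Finj h)
  have formX : ∀ i : Fin (m₁ * m₂ - 1), ∃ r s : ℕ, r < m₁ ∧ s < m₂ ∧ ¬(r = 0 ∧ s = 0) ∧
      (F (Sum.inl i)).1 = Ideal.span {((p ^ r * q ^ s : ℕ) : ZMod n)} :=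
    fun i => ⟨_, _, (hkey i).1, (hkey i).2.1, (hkey i).2.2, rfl⟩
  have form1 : ∀ s : Fin m₂, ∃ s' : ℕ, s' < m₂ ∧
      (F (Sum.inr (Sum.inl s))).1 = Ideal.span {((p ^ m₁ * q ^ s' : ℕ) : ZMod n)} :=
    fun s => ⟨s.1, s.2, rfl⟩
  have form2 : ∀ r : Fin m₁, ∃ r' : ℕ, r' < m₁ ∧
      (F (Sum.inr (Sum.inr r))).1 = Ideal.span {((p ^ r' * q ^ m₂ : ℕ) : ZMod n)} :=
    fun r => ⟨r.1, r.2, rfl⟩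
  refine ⟨part1, part2, part3, part4, ⟨SimpleGraph.Iso.symm
    { toEquiv := Equiv.ofBijective F ⟨Finj, Fsurj⟩, map_rel_iff' := ?_ }⟩⟩
  intro a b
  rcases a with i | s | r <;> rcases b with j | t | u
  · show (essentialIdealGraph (ZMod n)).Adj (F (Sum.inl i)) (F (Sum.inl j)) ↔
      (⊤ : SimpleGraph (Fin (m₁ * m₂ - 1))).Adj i j
    rw [SimpleGraph.top_adj]
    constructor
    · intro h hij
      exact h.1 (by rw [hij])
    · intro hij
      exact part1 _ _ (formX i) (Fne _ _ (fun hh => hij (Sum.inl.inj hh)))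
  · show (essentialIdealGraph (ZMod n)).Adj (F (Sum.inl i)) (F (Sum.inr (Sum.inl t))) ↔ True
    exact iff_of_true (part1 _ _ (formX i)
      (Fne (Sum.inl i) (Sum.inr (Sum.inl t)) (fun hh => Sum.inl_ne_inr hh))) trivial
  · show (essentialIdealGraph (ZMod n)).Adj (F (Sum.inl i)) (F (Sum.inr (Sum.inr u))) ↔ True
    exact iff_of_true (part1 _ _ (formX i)
      (Fne (Sum.inl i) (Sum.inr (Sum.inr u)) (fun hh => Sum.inl_ne_inr hh))) trivial
  · show (essentialIdealGraph (ZMod n)).Adj (F (Sum.inr (Sum.inl s))) (F (Sum.inl j)) ↔ True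
    exact iff_of_true ((part1 _ _ (formX j)
      (Fne (Sum.inl j) (Sum.inr (Sum.inl s)) (fun hh => Sum.inl_ne_inr hh))).symm) trivial
  · show (essentialIdealGraph (ZMod n)).Adj (F (Sum.inr (Sum.inl s))) (F (Sum.inr (Sum.inl t))) ↔
      (completeBipartiteGraph (Fin m₂) (Fin m₁)).Adj (Sum.inl s) (Sum.inl t)
    refine iff_of_false (part2 _ _ (form1 s) (form1 t)) ?_
    rintro (⟨-, hh⟩ | ⟨hh, -⟩) <;> exact absurd hh (by simp)
  · show (essentialIdealGraph (ZMod n)).Adj (F (Sum.inr (Sum.inl s))) (F (Sum.inr (Sum.inr u))) ↔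
      (completeBipartiteGraph (Fin m₂) (Fin m₁)).Adj (Sum.inl s) (Sum.inr u)
    exact iff_of_true (part4 _ _ (form1 s) (form2 u)) (Or.inl ⟨rfl, rfl⟩)
  · show (essentialIdealGraph (ZMod n)).Adj (F (Sum.inr (Sum.inr r))) (F (Sum.inl j)) ↔ True
    exact iff_of_true ((part1 _ _ (formX j)
      (Fne (Sum.inl j) (Sum.inr (Sum.inr r)) (fun hh => Sum.inl_ne_inr hh))).symm) trivial
  · show (essentialIdealGraph (ZMod n)).Adj (F (Sum.inr (Sum.inr r))) (F (Sum.inr (Sum.inl t))) ↔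
      (completeBipartiteGraph (Fin m₂) (Fin m₁)).Adj (Sum.inr r) (Sum.inl t)
    exact iff_of_true ((part4 _ _ (form1 t) (form2 r)).symm) (Or.inr ⟨rfl, rfl⟩)
  · show (essentialIdealGraph (ZMod n)).Adj (F (Sum.inr (Sum.inr r))) (F (Sum.inr (Sum.inr u))) ↔
      (completeBipartiteGraph (Fin m₂) (Fin m₁)).Adj (Sum.inr r) (Sum.inr u)
    refine iff_of_false (part3 _ _ (form2 r) (form2 u)) ?_
    rintro (⟨hh, -⟩ | ⟨-, hh⟩) <;> exact absurd hh (by simp)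
end

section
/- Let n = p^m where p is a prime and m > 1 is a positive integer. Then the Wiener index and the hyper-Wiener index of the essential ideal graph E_{Z_n} both equal the binomial coefficient C(m-1, 2) = (m-1)(m-2)/2. -/
open Polynomial

/-- The Wiener index of the essential ideal graph of `ZMod n`: the sum of the distances
between all unordered pairs of distinct vertices (i.e. half the sum over ordered pairs). -/
noncomputable def essWiener (n : ℕ) [NeZero n] : ℚ :=
  (∑ u : EssVert n, ∑ v : EssVert n,
    ((essentialIdealGraph (ZMod n)).dist u v : ℚ)) / 2

/-- The hyper-Wiener index of the essential ideal graph of `ZMod n`: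
`WW = W/2 + (1/2) Σ_{pairs} d(u,v)²`. -/
noncomputable def essHyperWiener (n : ℕ) [NeZero n] : ℚ :=
  essWiener n / 2 + (∑ u : EssVert n, ∑ v : EssVert n,
    ((essentialIdealGraph (ZMod n)).dist u v : ℚ) ^ 2) / 4

namespace EssAux

variable {p m : ℕ}

lemma pm_pow_m_eq_zero : (p : ZMod (p ^ m)) ^ m = 0 := by
  have h : ((p ^ m : ℕ) : ZMod (p ^ m)) = 0 := ZMod.natCast_self _
  push_cast at h
  exact h

lemma pm_pow_ne_zero (hp : p.Prime) [NeZero (p ^ m)] {k : ℕ} (hk : k < m) :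
    (p : ZMod (p ^ m)) ^ k ≠ 0 := by
  intro h
  have h2 : ((p ^ k : ℕ) : ZMod (p ^ m)) = 0 := by push_cast; exact h
  rw [ZMod.natCast_eq_zero_iff] at h2
  have := (Nat.pow_dvd_pow_iff_le_right hp.one_lt).1 h2
  omega

lemma exists_decomp (hp : p.Prime) [NeZero (p ^ m)] (x : ZMod (p ^ m)) (hx : x ≠ 0) :
    ∃ k < m, ∃ u : (ZMod (p ^ m))ˣ, x = (p : ZMod (p ^ m)) ^ k * u := by
  set a := x.val with ha
  have ha0 : a ≠ 0 := fun h => hx ((ZMod.val_eq_zero x).1 h)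
  have halt : a < p ^ m := ZMod.val_lt x
  set k := a.factorization p with hk
  refine ⟨k, ?_, ?_⟩
  · have h1 : p ^ k ∣ a := Nat.ordProj_dvd a p
    have h2 : p ^ k ≤ a := Nat.le_of_dvd (Nat.pos_of_ne_zero ha0) h1
    by_contra h
    push_neg at h
    have : p ^ m ≤ p ^ k := Nat.pow_le_pow_right hp.pos h
    omega
  · set b := a / p ^ k with hb
    have hab : p ^ k * b = a := Nat.ordProj_mul_ordCompl_eq_self a p
    have hpb : ¬ p ∣ b := Nat.not_dvd_ordCompl hp ha0
    have hcop : b.Coprime (p ^ m) :=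
      Nat.Coprime.pow_right _ ((Nat.Prime.coprime_iff_not_dvd hp).2 hpb).symm
    obtain ⟨u, hu⟩ := (ZMod.isUnit_iff_coprime b (p ^ m)).2 hcop
    refine ⟨u, ?_⟩
    have hxa : ((a : ℕ) : ZMod (p ^ m)) = x := ZMod.natCast_rightInverse x
    rw [← hxa, ← hab]
    push_cast
    rw [hu]

lemma mem_of_ne_bot (hp : p.Prime) [NeZero (p ^ m)] {I : Ideal (ZMod (p ^ m))}
    (hI : I ≠ ⊥) : (p : ZMod (p ^ m)) ^ (m - 1) ∈ I := by
  obtain ⟨x, hxI, hx⟩ := (Submodule.ne_bot_iff I).1 hI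
  obtain ⟨k, hk, u, hxe⟩ := exists_decomp hp x hx
  have hkm : k ≤ m - 1 := by omega
  have key : (p : ZMod (p ^ m)) ^ (m - 1)
      = ((p : ZMod (p ^ m)) ^ (m - 1 - k) * ↑u⁻¹) * x := by
    rw [hxe]
    have h3 : (p : ZMod (p ^ m)) ^ (m - 1 - k) * ↑u⁻¹ * ((p : ZMod (p ^ m)) ^ k * ↑u)
        = (p : ZMod (p ^ m)) ^ (m - 1 - k) * (p : ZMod (p ^ m)) ^ k * (↑u⁻¹ * ↑u) := by
      ring
    rw [h3, ← pow_add, Nat.sub_add_cancel hkm, Units.inv_mul, mul_one]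
  rw [key]
  exact I.mul_mem_left _ hxI

lemma adj_of_ne (hp : p.Prime) [NeZero (p ^ m)] {u v : EssVert (p ^ m)} (hne : u ≠ v)
    (hm : 1 < m) : (essentialIdealGraph (ZMod (p ^ m))).Adj u v := by
  refine ⟨hne, fun J hJ => ?_⟩
  have hsup : u.1 ⊔ v.1 ≠ ⊥ := by
    intro h
    exact u.2.1 (le_bot_iff.1 (le_of_le_of_eq le_sup_left h))
  rw [Submodule.ne_bot_iff]
  exact ⟨(p : ZMod (p ^ m)) ^ (m - 1),
    Submodule.mem_inf.2 ⟨mem_of_ne_bot hp hsup, mem_of_ne_bot hp hJ⟩,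
    pm_pow_ne_zero hp (by omega)⟩

lemma ideal_eq_span (hp : p.Prime) [NeZero (p ^ m)] (I : Ideal (ZMod (p ^ m))) :
    ∃ k ≤ m, I = Ideal.span {(p : ZMod (p ^ m)) ^ k} := by
  classical
  have hex : ∃ k, (p : ZMod (p ^ m)) ^ k ∈ I :=
    ⟨m, by rw [pm_pow_m_eq_zero]; exact I.zero_mem⟩
  set k := Nat.find hex with hkdef
  have hkmem : (p : ZMod (p ^ m)) ^ k ∈ I := Nat.find_spec hex
  have hkle : k ≤ m := Nat.find_min' hex (by rw [pm_pow_m_eq_zero]; exact I.zero_mem)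
  refine ⟨k, hkle, le_antisymm ?_ ?_⟩
  · intro x hx
    by_cases hx0 : x = 0
    · subst hx0; exact (Ideal.span _).zero_mem
    · obtain ⟨j, hj, u, hxe⟩ := exists_decomp hp x hx0
      have hpj : (p : ZMod (p ^ m)) ^ j ∈ I := by
        have h4 : (p : ZMod (p ^ m)) ^ j = x * ↑u⁻¹ := by
          rw [hxe, mul_assoc, Units.mul_inv, mul_one]
        rw [h4]
        exact I.mul_mem_right _ hx
      have hkj : k ≤ j := Nat.find_min' hex hpj
      rw [Ideal.mem_span_singleton']
      refine ⟨(p : ZMod (p ^ m)) ^ (j - k) * ↑u, ?_⟩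
      rw [hxe]
      have h5 : (p : ZMod (p ^ m)) ^ (j - k) * ↑u * (p : ZMod (p ^ m)) ^ k
          = (p : ZMod (p ^ m)) ^ (j - k) * (p : ZMod (p ^ m)) ^ k * ↑u := by ring
      rw [h5, ← pow_add, Nat.sub_add_cancel hkj]
  · rw [Ideal.span_le, Set.singleton_subset_iff]
    exact hkmem

lemma span_ne (hp : p.Prime) [NeZero (p ^ m)] {k l : ℕ} (hkl : k < l) (hk : k < m) :
    Ideal.span {(p : ZMod (p ^ m)) ^ k} ≠ Ideal.span {(p : ZMod (p ^ m)) ^ l} := by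
  intro h
  have hmem : (p : ZMod (p ^ m)) ^ k ∈ Ideal.span {(p : ZMod (p ^ m)) ^ l} :=
    by rw [← h]; exact Ideal.subset_span rfl
  rw [Ideal.mem_span_singleton'] at hmem
  obtain ⟨c, hc⟩ := hmem
  have h1 : (p : ZMod (p ^ m)) ^ (m - 1) = c * (p : ZMod (p ^ m)) ^ (m - 1 - k + l) := by
    have h2 : (p : ZMod (p ^ m)) ^ (m - 1)
        = (p : ZMod (p ^ m)) ^ (m - 1 - k) * (p : ZMod (p ^ m)) ^ k := by
      rw [← pow_add, Nat.sub_add_cancel (by omega)]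
    rw [h2, ← hc, pow_add]
    ring
  have hz : (p : ZMod (p ^ m)) ^ (m - 1 - k + l) = 0 := by
    have hge : m ≤ m - 1 - k + l := by omega
    have : (p : ZMod (p ^ m)) ^ (m - 1 - k + l)
        = (p : ZMod (p ^ m)) ^ m * (p : ZMod (p ^ m)) ^ (m - 1 - k + l - m) := by
      rw [← pow_add, Nat.add_sub_cancel' hge]
    rw [this, pm_pow_m_eq_zero, zero_mul]
  exact pm_pow_ne_zero hp (show m - 1 < m by omega) (by rw [h1, hz, mul_zero])

lemma card_vert (hp : p.Prime) (hm : 1 < m) [NeZero (p ^ m)] :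
    Fintype.card (EssVert (p ^ m)) = m - 1 := by
  have hbij : Function.Bijective (fun i : Fin (m - 1) =>
      (⟨Ideal.span {(p : ZMod (p ^ m)) ^ (i.1 + 1)},
        by
          rw [Ne, Ideal.span_singleton_eq_bot]
          exact pm_pow_ne_zero hp (by omega),
        by
          rw [Ne, Ideal.span_singleton_eq_top]
          intro hu
          have hup : IsUnit (p : ZMod (p ^ m)) := (isUnit_pow_iff (by omega)).1 hu
          have := (ZMod.isUnit_iff_coprime p (p ^ m)).1 hup
          have hp1 : p = 1 := this.eq_one_of_dvd (dvd_pow_self p (by omega))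
          exact hp.one_lt.ne' hp1⟩ : EssVert (p ^ m))) := by
    constructor
    · intro i j hij
      have h0 : Ideal.span {(p : ZMod (p ^ m)) ^ (i.1 + 1)}
          = Ideal.span {(p : ZMod (p ^ m)) ^ (j.1 + 1)} := congrArg Subtype.val hij
      rcases lt_trichotomy i.1 j.1 with h | h | h
      · exact absurd h0 (span_ne hp (by omega) (by omega))
      · exact Fin.ext h
      · exact absurd h0.symm (span_ne hp (by omega) (by omega))
    · rintro ⟨I, hIb, hIt⟩
      obtain ⟨k, hkle, hspan⟩ := ideal_eq_span hp I
      have hk0 : k ≠ 0 := by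
        intro h
        subst h
        rw [pow_zero, Ideal.span_singleton_one] at hspan
        exact hIt hspan
      have hkm : k ≠ m := by
        intro h
        subst h
        rw [pm_pow_m_eq_zero] at hspan
        simp only [Ideal.span_singleton_eq_bot.2 rfl] at hspan
        exact hIb hspan
      refine ⟨⟨k - 1, by omega⟩, ?_⟩
      have hsucc : k - 1 + 1 = k := by omega
      apply Subtype.ext
      show Ideal.span {(p : ZMod (p ^ m)) ^ (k - 1 + 1)} = I
      rw [hsucc, hspan]
  have := Fintype.card_of_bijective hbij
  rw [Fintype.card_fin] at this
  exact this.symm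

end EssAux

/-- For `n = p ^ m` with `p` prime and `m > 1`, the Wiener index and the hyper-Wiener
index of the essential ideal graph of `ZMod n` both equal `C(m-1, 2) = (m-1)(m-2)/2`. -/
theorem wiener_essentialIdealGraph_primePow (p m n : ℕ) (hp : p.Prime) (hm : 1 < m)
    (hn : n = p ^ m) [NeZero n] :
    essWiener n = ((m - 1).choose 2 : ℚ) ∧
    essHyperWiener n = ((m - 1).choose 2 : ℚ) := by
  classical
  subst hn
  set G := essentialIdealGraph (ZMod (p ^ m)) with hG
  have hdist : ∀ u v : EssVert (p ^ m), (G.dist u v : ℚ) = if u = v then 0 else 1 := by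
    intro u v
    by_cases h : u = v
    · subst h; simp [SimpleGraph.dist_self]
    · rw [if_neg h]
      norm_cast
      exact SimpleGraph.dist_eq_one_iff_adj.2 (EssAux.adj_of_ne hp h hm)
  have hcard : Fintype.card (EssVert (p ^ m)) = m - 1 := EssAux.card_vert hp hm
  have hrow : ∀ u : EssVert (p ^ m),
      ∑ v : EssVert (p ^ m), (if u = v then (0 : ℚ) else 1)
        = ((m - 1 : ℕ) : ℚ) - 1 := by
    intro u
    have h6 : ∀ v : EssVert (p ^ m),
        (if u = v then (0 : ℚ) else 1) = 1 - (if u = v then 1 else 0) := by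
      intro v; split <;> norm_num
    simp only [h6]
    rw [Finset.sum_sub_distrib, Finset.sum_const, Finset.sum_ite_eq]
    simp [hcard]
  have hS : (∑ u : EssVert (p ^ m), ∑ v : EssVert (p ^ m), (G.dist u v : ℚ))
      = ((m - 1 : ℕ) : ℚ) * (((m - 1 : ℕ) : ℚ) - 1) := by
    simp only [hdist, hrow, Finset.sum_const, Finset.card_univ, hcard, nsmul_eq_mul]
  have hS2 : (∑ u : EssVert (p ^ m), ∑ v : EssVert (p ^ m), (G.dist u v : ℚ) ^ 2)
      = ((m - 1 : ℕ) : ℚ) * (((m - 1 : ℕ) : ℚ) - 1) := by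
    have h7 : ∀ u v : EssVert (p ^ m), (G.dist u v : ℚ) ^ 2 = if u = v then 0 else 1 := by
      intro u v
      rw [hdist]
      split <;> norm_num
    simp only [h7, hrow, Finset.sum_const, Finset.card_univ, hcard, nsmul_eq_mul]
  have hW : essWiener (p ^ m) = ((m - 1).choose 2 : ℚ) := by
    rw [essWiener, ← hG, hS, Nat.cast_choose_two]
  refine ⟨hW, ?_⟩
  rw [essHyperWiener, hW, ← hG, hS2, Nat.cast_choose_two]
  ring
end

section
/- Let n = p_1 p_2 ⋯ p_k be a product of k ≥ 2 distinct primes. Then the Wiener index of the essential ideal graph E_{Z_n} equals (1/2) Σ_{t=1}^{k-1} C(k, t) [2^{k+1} + 2^t - 2^{k-t} - 7], and the hyper-Wiener index of E_{Z_n} equals (1/2) Σ_{t=1}^{k-1} C(k, t) [3·2^k - 2·2^{k-t} + 3·2^t - 13], where C(k, t) denotes the binomial coefficient. -/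
open Polynomial

set_option linter.unusedSectionVars false
set_option maxHeartbeats 1600000


variable {ι : Type*} [Fintype ι] [DecidableEq ι] {F : ι → Type*} [∀ i, Field (F i)]

/-- The ideal of a finite product of fields consisting of elements vanishing on `S`. -/
def idealOf (S : Finset ι) : Ideal (∀ i, F i) where
  carrier := {x | ∀ i ∈ S, x i = 0}
  zero_mem' := fun i _ => rfl
  add_mem' := fun {a b} ha hb i hi => by simp [ha i hi, hb i hi]
  smul_mem' := fun c x hx i hi => by simp [smul_eq_mul, hx i hi]

lemma mem_idealOf {S : Finset ι} {x : ∀ i, F i} : x ∈ idealOf S ↔ ∀ i ∈ S, x i = 0 := Iff.rfl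

lemma idealOf_anti {S T : Finset ι} (h : S ⊆ T) : idealOf (F := F) T ≤ idealOf S :=
  fun _ hx i hi => hx i (h hi)

lemma idealOf_le_iff {S T : Finset ι} : idealOf (F := F) S ≤ idealOf T ↔ T ⊆ S := by
  constructor
  · intro h i hi
    by_contra hiS
    have hx : (Pi.single i 1 : ∀ i, F i) ∈ idealOf S := by
      intro j hj
      rcases eq_or_ne j i with rfl | hne
      · exact absurd hj hiS
      · exact Pi.single_eq_of_ne hne 1
    have := h hx i hi
    simp at this
  · exact idealOf_anti

lemma idealOf_injective : Function.Injective (idealOf (ι := ι) (F := F)) := by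
  intro S T h
  exact Finset.Subset.antisymm (idealOf_le_iff.mp h.ge) (idealOf_le_iff.mp h.le)

@[simp] lemma idealOf_empty : idealOf (F := F) ∅ = ⊤ := by
  rw [eq_top_iff]; intro x _ i hi; simp at hi

@[simp] lemma idealOf_univ : idealOf (F := F) Finset.univ = ⊥ := by
  apply le_antisymm _ bot_le
  intro x hx
  have : x = 0 := funext fun i => hx i (Finset.mem_univ i)
  simp [this]

lemma idealOf_inf (S T : Finset ι) :
    idealOf (F := F) S ⊓ idealOf T = idealOf (S ∪ T) := by
  apply le_antisymm
  · rintro x ⟨hxS, hxT⟩ i hi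
    rcases Finset.mem_union.mp hi with h | h
    · exact hxS i h
    · exact hxT i h
  · exact le_inf (idealOf_anti Finset.subset_union_left)
      (idealOf_anti Finset.subset_union_right)

lemma idealOf_sup (S T : Finset ι) :
    idealOf (F := F) S ⊔ idealOf T = idealOf (S ∩ T) := by
  apply le_antisymm
  · exact sup_le (idealOf_anti Finset.inter_subset_left)
      (idealOf_anti Finset.inter_subset_right)
  · intro x hx
    have hy : (fun i => if i ∈ S then 0 else x i) ∈ idealOf (F := F) S := by
      intro i hi; simp [hi]
    have hz : (fun i => if i ∈ S then x i else 0) ∈ idealOf (F := F) T := by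
      intro i hi
      by_cases hiS : i ∈ S
      · simp [hiS, hx i (Finset.mem_inter.mpr ⟨hiS, hi⟩)]
      · simp [hiS]
    have hxeq : x = (fun i => if i ∈ S then 0 else x i) + fun i => if i ∈ S then x i else 0 := by
      funext i; by_cases hiS : i ∈ S <;> simp [hiS]
    rw [hxeq]
    exact Submodule.add_mem _ (Submodule.mem_sup_left hy) (Submodule.mem_sup_right hz)

lemma idealOf_surjective (I : Ideal (∀ i, F i)) : ∃ S : Finset ι, I = idealOf S := by
  classical
  refine ⟨Finset.univ.filter (fun i => ∀ x ∈ I, x i = 0), le_antisymm ?_ ?_⟩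
  · intro x hx i hi
    exact (Finset.mem_filter.mp hi).2 x hx
  · intro x hx
    have key : ∀ i, Pi.single i (x i) ∈ I := by
      intro i
      by_cases h : ∀ y ∈ I, y i = 0
      · have hxi : x i = 0 := hx i (Finset.mem_filter.mpr ⟨Finset.mem_univ _, h⟩)
        rw [hxi, Pi.single_zero]
        exact I.zero_mem
      · push_neg at h
        obtain ⟨y, hyI, hyi⟩ := h
        have heq : Pi.single i (x i) = (Pi.single i (x i * (y i)⁻¹) : ∀ i, F i) * y := by
          funext j
          rcases eq_or_ne j i with rfl | hne
          · simp [Pi.single_eq_same, mul_assoc, inv_mul_cancel₀ hyi]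
          · simp [Pi.single_eq_of_ne hne]
        rw [heq]
        exact I.mul_mem_left _ hyI
    have hs : (∑ i, Pi.single i (x i)) ∈ I := Ideal.sum_mem I fun i _ => key i
    rwa [Finset.univ_sum_single] at hs

/-- Essentiality transfers along an order isomorphism of ideal lattices. -/
lemma isEssentialIdeal_map_orderIso {A B : Type*} [CommRing A] [CommRing B]
    (Ψ : Ideal A ≃o Ideal B) (I : Ideal A) :
    IsEssentialIdeal (Ψ I) ↔ IsEssentialIdeal I := by
  have hbot : ∀ J : Ideal A, Ψ J = ⊥ ↔ J = ⊥ := by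
    intro J
    rw [← Ψ.map_bot, Ψ.injective.eq_iff]
  have hbot' : ∀ J : Ideal B, Ψ.symm J = ⊥ ↔ J = ⊥ := by
    intro J
    rw [← Ψ.symm.map_bot, Ψ.symm.injective.eq_iff]
  constructor
  · intro h J hJ
    have h2 := h (Ψ J) (fun hc => hJ ((hbot J).mp hc))
    rw [← Ψ.map_inf] at h2
    exact fun hc => h2 (by rw [hc, Ψ.map_bot])
  · intro h J hJ
    have h2 := h (Ψ.symm J) (fun hc => hJ ((hbot' J).mp hc))
    intro hc
    apply h2
    have : Ψ (I ⊓ Ψ.symm J) = ⊥ := by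
      rw [Ψ.map_inf, Ψ.apply_symm_apply, hc]
    rwa [hbot] at this

section
variable {V V' : Type*} {G : SimpleGraph V} {G' : SimpleGraph V'}

lemma iso_dist_le (φ : G ≃g G') (u v : V) : G'.dist (φ u) (φ v) ≤ G.dist u v := by
  by_cases h : G.Reachable u v
  · obtain ⟨p, hp⟩ := h.exists_walk_length_eq_dist
    calc G'.dist (φ u) (φ v) ≤ (p.map φ.toHom).length := SimpleGraph.dist_le _
    _ = G.dist u v := by rw [SimpleGraph.Walk.length_map, hp]
  · have h0 : G.dist u v = 0 := by
      rw [SimpleGraph.dist_eq_zero_iff_eq_or_not_reachable]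
      exact Or.inr h
    have h0' : G'.dist (φ u) (φ v) = 0 := by
      rw [SimpleGraph.dist_eq_zero_iff_eq_or_not_reachable]
      refine Or.inr fun hr => h ?_
      have := hr.map φ.symm.toHom
      simpa using this
    omega

lemma iso_dist_eq (φ : G ≃g G') (u v : V) : G'.dist (φ u) (φ v) = G.dist u v := by
  refine le_antisymm (iso_dist_le φ u v) ?_
  have := iso_dist_le φ.symm (φ u) (φ v)
  simpa using this

end


open Finset

def Pk (k : ℕ) : Finset (Finset (Fin k)) :=
  Finset.univ.filter (fun S => S ≠ ∅ ∧ S ≠ Finset.univ)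

lemma mem_Pk {k : ℕ} {S : Finset (Fin k)} : S ∈ Pk k ↔ S ≠ ∅ ∧ S ≠ Finset.univ := by
  simp [Pk]

lemma compl_mem_Pk {k : ℕ} {S : Finset (Fin k)} (h : S ∈ Pk k) : Sᶜ ∈ Pk k := by
  rw [mem_Pk] at h ⊢
  exact ⟨by simpa [Finset.compl_eq_empty_iff] using h.2,
    by simpa [Finset.compl_eq_univ_iff] using h.1⟩

lemma card_Pk {k : ℕ} (hk : 1 ≤ k) : ((Pk k).card : ℚ) = 2 ^ k - 2 := by
  haveI : Nonempty (Fin k) := ⟨⟨0, by omega⟩⟩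
  have hsplit := Finset.card_filter_add_card_filter_not
    (s := (Finset.univ : Finset (Finset (Fin k))))
    (p := fun S => S ≠ ∅ ∧ S ≠ Finset.univ)
  have hneg : Finset.univ.filter (fun S : Finset (Fin k) => ¬(S ≠ ∅ ∧ S ≠ Finset.univ))
      = {∅, Finset.univ} := by
    ext S
    simp only [Finset.mem_filter, Finset.mem_univ, true_and, Finset.mem_insert,
      Finset.mem_singleton]
    tauto
  have hcard2 : ({∅, Finset.univ} : Finset (Finset (Fin k))).card = 2 := by
    rw [Finset.card_pair]
    exact (Finset.univ_nonempty.ne_empty).symm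
  have huniv : (Finset.univ : Finset (Finset (Fin k))).card = 2 ^ k := by
    rw [Finset.card_univ, Fintype.card_finset, Fintype.card_fin]
  rw [hneg, hcard2, huniv] at hsplit
  have h2k : 2 ≤ 2 ^ k := by
    calc 2 = 2 ^ 1 := rfl
    _ ≤ 2 ^ k := Nat.pow_le_pow_right (by norm_num) hk
  have : (Pk k).card = 2 ^ k - 2 := by unfold Pk; omega
  rw [this]
  push_cast [Nat.cast_sub h2k]
  ring

lemma sum_pow_compl (k : ℕ) :
    ∑ S : Finset (Fin k), (2 : ℚ) ^ (k - S.card) = 3 ^ k := by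
  have h := Finset.prod_add (fun _ : Fin k => (1 : ℚ)) (fun _ : Fin k => (2 : ℚ)) Finset.univ
  simp only [Finset.prod_const_one, one_mul, Finset.prod_const] at h
  norm_num at h
  rw [h]
  apply Finset.sum_congr rfl
  intro S _
  congr 1
  rw [← Finset.compl_eq_univ_sdiff, Finset.card_compl, Fintype.card_fin]

lemma sum_Pk_pow {k : ℕ} (hk : 1 ≤ k) :
    ∑ S ∈ Pk k, (2 : ℚ) ^ (k - S.card) = 3 ^ k - 2 ^ k - 1 := by
  haveI : Nonempty (Fin k) := ⟨⟨0, by omega⟩⟩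
  have hsplit := Finset.sum_filter_add_sum_filter_not
    (Finset.univ : Finset (Finset (Fin k)))
    (fun S => S ≠ ∅ ∧ S ≠ Finset.univ) (fun S => (2 : ℚ) ^ (k - S.card))
  have hneg : Finset.univ.filter (fun S : Finset (Fin k) => ¬(S ≠ ∅ ∧ S ≠ Finset.univ))
      = {∅, Finset.univ} := by
    ext S
    simp only [Finset.mem_filter, Finset.mem_univ, true_and, Finset.mem_insert,
      Finset.mem_singleton]
    tauto
  rw [hneg, sum_pow_compl] at hsplit
  have hpair : ∑ S ∈ ({∅, Finset.univ} : Finset (Finset (Fin k))),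
      (2 : ℚ) ^ (k - S.card) = 2 ^ k + 1 := by
    rw [Finset.sum_pair (Finset.univ_nonempty.ne_empty).symm]
    simp [Finset.card_univ]
  rw [hpair] at hsplit
  have : ∑ S ∈ Pk k, (2 : ℚ) ^ (k - S.card)
      = ∑ S ∈ Finset.univ.filter (fun S : Finset (Fin k) => S ≠ ∅ ∧ S ≠ Finset.univ),
        (2 : ℚ) ^ (k - S.card) := rfl
  rw [this]
  linarith

lemma cond_compl_iff {k : ℕ} (S T : Finset (Fin k)) :
    (S ∩ T = ∅ ∧ S ∪ T = Finset.univ) ↔ Sᶜ = T := by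
  constructor
  · rintro ⟨h1, h2⟩
    ext i
    rw [Finset.mem_compl]
    constructor
    · intro hiS
      have : i ∈ S ∪ T := by rw [h2]; exact Finset.mem_univ i
      rcases Finset.mem_union.mp this with h | h
      · exact absurd h hiS
      · exact h
    · intro hiT hiS
      have : i ∈ S ∩ T := Finset.mem_inter.mpr ⟨hiS, hiT⟩
      rw [h1] at this
      simp at this
  · rintro rfl
    exact ⟨by simp [Finset.inter_comm], by simp [Finset.union_comm]⟩

lemma SB_eval {k : ℕ} (hk : 1 ≤ k) :
    ∑ S ∈ Pk k, ∑ T ∈ Pk k, (if S ∩ T = ∅ then (1 : ℚ) else 0)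
      = 3 ^ k - 2 ^ k - 1 - (Pk k).card := by
  have hin : ∀ S ∈ Pk k, ∑ T ∈ Pk k, (if S ∩ T = ∅ then (1 : ℚ) else 0)
      = (2 : ℚ) ^ (k - S.card) - 1 := by
    intro S hS
    rw [Finset.sum_boole]
    have hfil : (Pk k).filter (fun T => S ∩ T = ∅) = Sᶜ.powerset.erase ∅ := by
      ext T
      simp only [Finset.mem_filter, mem_Pk, Finset.mem_erase, Finset.mem_powerset]
      constructor
      · rintro ⟨⟨hT0, _⟩, hST⟩
        refine ⟨hT0, fun i hi => ?_⟩
        rw [Finset.mem_compl]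
        intro hiS
        have : i ∈ S ∩ T := Finset.mem_inter.mpr ⟨hiS, hi⟩
        rw [hST] at this
        simp at this
      · rintro ⟨hT0, hsub⟩
        refine ⟨⟨hT0, fun hTu => ?_⟩, ?_⟩
        · rw [hTu] at hsub
          have hS0 : S = ∅ := by
            rw [← Finset.compl_eq_univ_iff]
            exact Finset.univ_subset_iff.mp hsub
          exact (mem_Pk.mp hS).1 hS0
        · apply Finset.eq_empty_iff_forall_notMem.mpr
          intro i hi
          obtain ⟨hiS, hiT⟩ := Finset.mem_inter.mp hi
          exact (Finset.mem_compl.mp (hsub hiT)) hiS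
    rw [hfil]
    have hcard : (Sᶜ.powerset.erase ∅).card = 2 ^ (Sᶜ.card) - 1 := by
      rw [Finset.card_erase_of_mem (Finset.empty_mem_powerset _), Finset.card_powerset]
    rw [hcard, Finset.card_compl, Fintype.card_fin]
    have h1le : 1 ≤ 2 ^ (k - S.card) := Nat.one_le_two_pow
    push_cast [Nat.cast_sub h1le]
    ring
  rw [Finset.sum_congr rfl hin, Finset.sum_sub_distrib, sum_Pk_pow hk, Finset.sum_const,
    nsmul_eq_mul, mul_one]

lemma Seq_eval {k : ℕ} :
    ∑ S ∈ Pk k, ∑ T ∈ Pk k,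
      (if S ∩ T = ∅ ∧ S ∪ T = Finset.univ then (1 : ℚ) else 0) = (Pk k).card := by
  have hin : ∀ S ∈ Pk k, ∑ T ∈ Pk k,
      (if S ∩ T = ∅ ∧ S ∪ T = Finset.univ then (1 : ℚ) else 0) = 1 := by
    intro S hS
    have : ∀ T ∈ Pk k, (if S ∩ T = ∅ ∧ S ∪ T = Finset.univ then (1 : ℚ) else 0)
        = (if Sᶜ = T then (1 : ℚ) else 0) := by
      intro T _
      rw [if_congr (cond_compl_iff S T) rfl rfl]
    rw [Finset.sum_congr rfl this, Finset.sum_ite_eq, if_pos (compl_mem_Pk hS)]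
  rw [Finset.sum_congr rfl hin, Finset.sum_const, nsmul_eq_mul, mul_one]

lemma SC_eval {k : ℕ} (hk : 1 ≤ k) :
    ∑ S ∈ Pk k, ∑ T ∈ Pk k,
      (if S ∩ T ≠ ∅ ∧ S ∪ T = Finset.univ then (1 : ℚ) else 0)
      = 3 ^ k - 2 ^ k - 1 - 2 * (Pk k).card := by
  have hre : ∑ S ∈ Pk k, ∑ T ∈ Pk k,
      (if S ∩ T ≠ ∅ ∧ S ∪ T = Finset.univ then (1 : ℚ) else 0)
      = ∑ S ∈ Pk k, ∑ T ∈ Pk k,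
        (if S ∩ T = ∅ ∧ S ∪ T ≠ Finset.univ then (1 : ℚ) else 0) := by
    rw [← Finset.sum_product', ← Finset.sum_product']
    apply Finset.sum_nbij' (i := fun x => (x.1ᶜ, x.2ᶜ)) (j := fun x => (x.1ᶜ, x.2ᶜ))
    · rintro ⟨S, T⟩ hx
      rw [Finset.mem_product] at hx ⊢
      exact ⟨compl_mem_Pk hx.1, compl_mem_Pk hx.2⟩
    · rintro ⟨S, T⟩ hx
      rw [Finset.mem_product] at hx ⊢
      exact ⟨compl_mem_Pk hx.1, compl_mem_Pk hx.2⟩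
    · rintro ⟨S, T⟩ _
      simp
    · rintro ⟨S, T⟩ _
      simp
    · rintro ⟨S, T⟩ _
      apply if_congr _ rfl rfl
      constructor
      · rintro ⟨h1, h2⟩
        refine ⟨?_, ?_⟩
        · rw [← Finset.compl_union, h2, Finset.compl_univ]
        · rw [← Finset.compl_inter, Ne, Finset.compl_eq_univ_iff]
          exact h1
      · rintro ⟨h1, h2⟩
        refine ⟨?_, ?_⟩
        · rw [← Finset.compl_inter, Ne, Finset.compl_eq_univ_iff] at h2
          exact h2
        · rw [← Finset.compl_union, Finset.compl_eq_empty_iff] at h1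
          exact h1
  have hsplit : ∀ S ∈ Pk k, ∀ T ∈ Pk k, (if S ∩ T = ∅ then (1 : ℚ) else 0)
      = (if S ∩ T = ∅ ∧ S ∪ T ≠ Finset.univ then (1 : ℚ) else 0)
        + (if S ∩ T = ∅ ∧ S ∪ T = Finset.univ then (1 : ℚ) else 0) := by
    intro S _ T _
    by_cases h1 : S ∩ T = ∅ <;> by_cases h2 : S ∪ T = Finset.univ <;> simp [h1, h2]
  have hSB := SB_eval (k := k) hk
  have : ∑ S ∈ Pk k, ∑ T ∈ Pk k, (if S ∩ T = ∅ then (1 : ℚ) else 0)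
      = (∑ S ∈ Pk k, ∑ T ∈ Pk k, (if S ∩ T = ∅ ∧ S ∪ T ≠ Finset.univ then (1 : ℚ) else 0))
        + ∑ S ∈ Pk k, ∑ T ∈ Pk k,
            (if S ∩ T = ∅ ∧ S ∪ T = Finset.univ then (1 : ℚ) else 0) := by
    rw [← Finset.sum_add_distrib]
    apply Finset.sum_congr rfl
    intro S hS
    rw [← Finset.sum_add_distrib]
    exact Finset.sum_congr rfl fun T hT => hsplit S hS T hT
  rw [hSB, Seq_eval] at this
  rw [hre]
  linarith

lemma master_sum {k : ℕ} (hk : 1 ≤ k) (a b c : ℚ) :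
    ∑ S ∈ Pk k, ∑ T ∈ Pk k,
      (if S = T then 0 else if S ∩ T = ∅ then a
        else if S ∪ T = Finset.univ then c else b)
    = b * (((Pk k).card : ℚ) ^ 2 - (Pk k).card)
      + (a - b) * (3 ^ k - 2 ^ k - 1 - (Pk k).card)
      + (c - b) * (3 ^ k - 2 ^ k - 1 - 2 * (Pk k).card) := by
  have hpt : ∀ S ∈ Pk k, ∀ T ∈ Pk k,
      (if S = T then (0 : ℚ) else if S ∩ T = ∅ then a
        else if S ∪ T = Finset.univ then c else b)
      = (if S = T then 0 else b)
        + (a - b) * (if S ∩ T = ∅ then 1 else 0)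
        + (c - b) * (if S ∩ T ≠ ∅ ∧ S ∪ T = Finset.univ then 1 else 0) := by
    intro S hS T hT
    by_cases h1 : S = T
    · subst h1
      rw [mem_Pk] at hS
      simp [Finset.inter_self, Finset.union_self, hS.1, hS.2]
    · by_cases h2 : S ∩ T = ∅
      · simp [h1, h2]
      · by_cases h3 : S ∪ T = Finset.univ <;> simp [h1, h2, h3] <;> ring
  have hdiag : ∑ S ∈ Pk k, ∑ T ∈ Pk k, (if S = T then (0 : ℚ) else b)
      = b * (((Pk k).card : ℚ) ^ 2 - (Pk k).card) := by
    have hin : ∀ S ∈ Pk k, ∑ T ∈ Pk k, (if S = T then (0 : ℚ) else b)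
        = b * (Pk k).card - b := by
      intro S hS
      have : ∀ T ∈ Pk k, (if S = T then (0 : ℚ) else b)
          = b - (if S = T then b else 0) := by
        intro T _
        by_cases h : S = T <;> simp [h]
      rw [Finset.sum_congr rfl this, Finset.sum_sub_distrib, Finset.sum_const,
        Finset.sum_ite_eq, if_pos hS, nsmul_eq_mul]
      ring
    rw [Finset.sum_congr rfl hin, Finset.sum_sub_distrib]
    simp only [Finset.sum_const, nsmul_eq_mul]
    ring
  calc ∑ S ∈ Pk k, ∑ T ∈ Pk k,
      (if S = T then (0 : ℚ) else if S ∩ T = ∅ then a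
        else if S ∪ T = Finset.univ then c else b)
      = ∑ S ∈ Pk k, ∑ T ∈ Pk k,
        ((if S = T then 0 else b)
          + (a - b) * (if S ∩ T = ∅ then 1 else 0)
          + (c - b) * (if S ∩ T ≠ ∅ ∧ S ∪ T = Finset.univ then 1 else 0)) := by
        apply Finset.sum_congr rfl
        intro S hS
        exact Finset.sum_congr rfl fun T hT => hpt S hS T hT
    _ = (∑ S ∈ Pk k, ∑ T ∈ Pk k, (if S = T then (0 : ℚ) else b))
        + (a - b) * (∑ S ∈ Pk k, ∑ T ∈ Pk k, (if S ∩ T = ∅ then (1 : ℚ) else 0))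
        + (c - b) * (∑ S ∈ Pk k, ∑ T ∈ Pk k,
            (if S ∩ T ≠ ∅ ∧ S ∪ T = Finset.univ then (1 : ℚ) else 0)) := by
        rw [Finset.mul_sum, Finset.mul_sum, ← Finset.sum_add_distrib, ← Finset.sum_add_distrib]
        apply Finset.sum_congr rfl
        intro S _
        rw [Finset.mul_sum, Finset.mul_sum, ← Finset.sum_add_distrib, ← Finset.sum_add_distrib]
    _ = _ := by rw [hdiag, SB_eval hk, SC_eval hk]

lemma icc_split {k : ℕ} (hk : 2 ≤ k) (f : ℕ → ℚ) :
    ∑ t ∈ Finset.Icc 1 (k - 1), f t = (∑ t ∈ Finset.range (k + 1), f t) - f 0 - f k := by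
  have h : Finset.range (k + 1) = insert 0 (insert k (Finset.Icc 1 (k - 1))) := by
    ext t
    simp only [Finset.mem_range, Finset.mem_insert, Finset.mem_Icc]
    omega
  rw [h, Finset.sum_insert (by simp only [Finset.mem_insert, Finset.mem_Icc]; omega),
    Finset.sum_insert (by simp only [Finset.mem_Icc]; omega)]
  ring

lemma sum_choose_range (k : ℕ) : ∑ t ∈ Finset.range (k + 1), (k.choose t : ℚ) = 2 ^ k := by
  have := Nat.sum_range_choose k
  have h2 : ((∑ t ∈ Finset.range (k + 1), k.choose t : ℕ) : ℚ) = ((2 ^ k : ℕ) : ℚ) := by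
    exact_mod_cast congrArg (Nat.cast : ℕ → ℚ) this
  push_cast at h2
  exact h2

lemma sum_choose_pow_range (k : ℕ) :
    ∑ t ∈ Finset.range (k + 1), (k.choose t : ℚ) * 2 ^ t = 3 ^ k := by
  have h := add_pow (2 : ℚ) 1 k
  norm_num at h
  rw [h]
  apply Finset.sum_congr rfl
  intro t _
  ring

lemma sum_choose_Icc {k : ℕ} (hk : 2 ≤ k) :
    ∑ t ∈ Finset.Icc 1 (k - 1), (k.choose t : ℚ) = 2 ^ k - 2 := by
  rw [icc_split hk, sum_choose_range]
  simp
  ring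

lemma sum_choose_pow_Icc {k : ℕ} (hk : 2 ≤ k) :
    ∑ t ∈ Finset.Icc 1 (k - 1), (k.choose t : ℚ) * 2 ^ t = 3 ^ k - 1 - 2 ^ k := by
  rw [icc_split hk, sum_choose_pow_range]
  simp

lemma sum_choose_pow_rev_Icc {k : ℕ} (hk : 2 ≤ k) :
    ∑ t ∈ Finset.Icc 1 (k - 1), (k.choose t : ℚ) * 2 ^ (k - t)
      = 3 ^ k - 1 - 2 ^ k := by
  rw [← sum_choose_pow_Icc hk]
  apply Finset.sum_nbij' (i := fun t => k - t) (j := fun t => k - t)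
  · intro t ht
    rw [Finset.mem_Icc] at ht ⊢
    omega
  · intro t ht
    rw [Finset.mem_Icc] at ht ⊢
    omega
  · intro t ht
    rw [Finset.mem_Icc] at ht
    omega
  · intro t ht
    rw [Finset.mem_Icc] at ht
    omega
  · intro t ht
    rw [Finset.mem_Icc] at ht
    rw [Nat.choose_symm (show t ≤ k by omega)]


abbrev SubVert (k : ℕ) := {S : Finset (Fin k) // S ≠ ∅ ∧ S ≠ Finset.univ}

def subGraph (k : ℕ) : SimpleGraph (SubVert k) where
  Adj S T := S ≠ T ∧ S.1 ∩ T.1 = ∅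
  symm := ⟨by
    rintro S T ⟨hne, h⟩
    exact ⟨hne.symm, by rwa [Finset.inter_comm]⟩⟩
  loopless := ⟨fun S h => h.1 rfl⟩

variable {k : ℕ}

lemma subGraph_adj_of_inter (u w : SubVert k) (h : u.1 ∩ w.1 = ∅) :
    (subGraph k).Adj u w := by
  refine ⟨fun hc => ?_, h⟩
  subst hc
  rw [Finset.inter_self] at h
  exact u.2.1 h

lemma subGraph_dist (u v : SubVert k) :
    (subGraph k).dist u v =
      if u = v then 0 else if u.1 ∩ v.1 = ∅ then 1
      else if u.1 ∪ v.1 = Finset.univ then 3 else 2 := by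
  split_ifs with h1 h2 h3
  · subst h1; simp
  · exact SimpleGraph.dist_eq_one_iff_adj.mpr ⟨h1, h2⟩
  · -- distance 3
    have hw1 : (u.1ᶜ : Finset (Fin k)) ≠ ∅ ∧ u.1ᶜ ≠ Finset.univ := by
      constructor
      · simpa using u.2.2
      · simpa using u.2.1
    have hw2 : (v.1ᶜ : Finset (Fin k)) ≠ ∅ ∧ v.1ᶜ ≠ Finset.univ := by
      constructor
      · simpa using v.2.2
      · simpa using v.2.1
    set w1 : SubVert k := ⟨u.1ᶜ, hw1⟩
    set w2 : SubVert k := ⟨v.1ᶜ, hw2⟩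
    have a1 : (subGraph k).Adj u w1 := subGraph_adj_of_inter _ _ (by show u.1 ∩ u.1ᶜ = ∅; simp)
    have a2 : (subGraph k).Adj w1 w2 := subGraph_adj_of_inter _ _ (by
      show u.1ᶜ ∩ v.1ᶜ = ∅
      rw [← Finset.compl_union, h3, Finset.compl_univ])
    have a3 : (subGraph k).Adj w2 v := subGraph_adj_of_inter _ _ (by
      show v.1ᶜ ∩ v.1 = ∅
      rw [Finset.inter_comm]; simp)
    set p : (subGraph k).Walk u v :=
      SimpleGraph.Walk.cons a1 (SimpleGraph.Walk.cons a2 (SimpleGraph.Walk.cons a3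
        SimpleGraph.Walk.nil))
    have hle : (subGraph k).dist u v ≤ 3 := by
      have := SimpleGraph.dist_le p
      simpa [p] using this
    have hne0 : (subGraph k).dist u v ≠ 0 := by
      rw [SimpleGraph.dist_ne_zero_iff_ne_and_reachable]
      exact ⟨h1, ⟨p⟩⟩
    have hne1 : (subGraph k).dist u v ≠ 1 := by
      rw [Ne, SimpleGraph.dist_eq_one_iff_adj]
      exact fun ha => h2 ha.2
    have hne2 : (subGraph k).dist u v ≠ 2 := by
      intro hd
      obtain ⟨q, hq⟩ := SimpleGraph.exists_walk_of_dist_ne_zero (G := subGraph k) (u := u)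
        (v := v) (by omega)
      rw [hd] at hq
      cases q with
      | nil => simp at hq
      | cons ha q' =>
        rename_i w
        cases q' with
        | nil => simp at hq
        | cons hb r =>
          rename_i x
          have hr : r.length = 0 := by
            simp only [SimpleGraph.Walk.length_cons] at hq
            omega
          have hxv := r.eq_of_length_eq_zero hr
          rw [hxv] at hb
          have hw : w.1 = ∅ := by
            apply Finset.eq_empty_iff_forall_notMem.mpr
            intro i hi
            have hiu : i ∈ u.1 ∪ v.1 := by rw [h3]; exact Finset.mem_univ i
            rcases Finset.mem_union.mp hiu with h | h
            · have : i ∈ u.1 ∩ w.1 := Finset.mem_inter.mpr ⟨h, hi⟩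
              rw [ha.2] at this
              simp at this
            · have : i ∈ w.1 ∩ v.1 := Finset.mem_inter.mpr ⟨hi, h⟩
              rw [hb.2] at this
              simp at this
          exact w.2.1 hw
    omega
  · -- distance 2
    have hwp : ((u.1 ∪ v.1)ᶜ : Finset (Fin k)) ≠ ∅ ∧ (u.1 ∪ v.1)ᶜ ≠ Finset.univ := by
      constructor
      · rw [Ne, Finset.compl_eq_empty_iff]; exact h3
      · simp only [Ne, Finset.compl_eq_univ_iff]
        intro hc
        exact u.2.1 (Finset.union_eq_empty.mp hc).1
    set w : SubVert k := ⟨(u.1 ∪ v.1)ᶜ, hwp⟩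
    have a1 : (subGraph k).Adj u w := subGraph_adj_of_inter _ _ (by
      show u.1 ∩ (u.1 ∪ v.1)ᶜ = ∅
      rw [Finset.compl_union]
      rw [← Finset.inter_assoc]
      simp)
    have a2 : (subGraph k).Adj w v := subGraph_adj_of_inter _ _ (by
      show (u.1 ∪ v.1)ᶜ ∩ v.1 = ∅
      rw [Finset.compl_union, Finset.inter_assoc]
      simp [Finset.inter_comm])
    set p : (subGraph k).Walk u v :=
      SimpleGraph.Walk.cons a1 (SimpleGraph.Walk.cons a2 SimpleGraph.Walk.nil)
    have hle : (subGraph k).dist u v ≤ 2 := by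
      have := SimpleGraph.dist_le p
      simpa [p] using this
    have hne0 : (subGraph k).dist u v ≠ 0 := by
      rw [SimpleGraph.dist_ne_zero_iff_ne_and_reachable]
      exact ⟨h1, ⟨p⟩⟩
    have hne1 : (subGraph k).dist u v ≠ 1 := by
      rw [Ne, SimpleGraph.dist_eq_one_iff_adj]
      exact fun ha => h2 ha.2
    omega

lemma sum_subvert {k : ℕ} (g : Finset (Fin k) → ℚ) :
    ∑ u : SubVert k, g u.1 = ∑ S ∈ Pk k, g S :=
  (Finset.sum_subtype (Pk k) (fun _ => mem_Pk) g).symm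

lemma subvert_master {k : ℕ} (hk : 2 ≤ k) (a b c : ℚ) :
    ∑ u : SubVert k, ∑ v : SubVert k,
      (if u.1 = v.1 then 0 else if u.1 ∩ v.1 = ∅ then a
        else if u.1 ∪ v.1 = Finset.univ then c else b)
    = b * (((Pk k).card : ℚ) ^ 2 - (Pk k).card)
      + (a - b) * (3 ^ k - 2 ^ k - 1 - (Pk k).card)
      + (c - b) * (3 ^ k - 2 ^ k - 1 - 2 * (Pk k).card) := by
  have h1 : ∀ u : SubVert k, ∑ v : SubVert k,
      (if u.1 = v.1 then (0 : ℚ) else if u.1 ∩ v.1 = ∅ then a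
        else if u.1 ∪ v.1 = Finset.univ then c else b)
      = ∑ T ∈ Pk k, (if u.1 = T then (0 : ℚ) else if u.1 ∩ T = ∅ then a
        else if u.1 ∪ T = Finset.univ then c else b) := fun u =>
    sum_subvert (fun T => if u.1 = T then (0 : ℚ) else if u.1 ∩ T = ∅ then a
        else if u.1 ∪ T = Finset.univ then c else b)
  calc ∑ u : SubVert k, ∑ v : SubVert k,
      (if u.1 = v.1 then (0 : ℚ) else if u.1 ∩ v.1 = ∅ then a
        else if u.1 ∪ v.1 = Finset.univ then c else b)
      = ∑ u : SubVert k, ∑ T ∈ Pk k, (if u.1 = T then (0 : ℚ) else if u.1 ∩ T = ∅ then a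
        else if u.1 ∪ T = Finset.univ then c else b) := by
        exact Finset.sum_congr rfl fun u _ => h1 u
    _ = ∑ S ∈ Pk k, ∑ T ∈ Pk k, (if S = T then (0 : ℚ) else if S ∩ T = ∅ then a
        else if S ∪ T = Finset.univ then c else b) :=
        sum_subvert (fun S => ∑ T ∈ Pk k, (if S = T then (0 : ℚ) else if S ∩ T = ∅ then a
          else if S ∪ T = Finset.univ then c else b))
    _ = _ := master_sum (by omega) a b c

lemma dist_cast_eq {k : ℕ} (u v : SubVert k) :
    ((subGraph k).dist u v : ℚ)
      = (if u.1 = v.1 then 0 else if u.1 ∩ v.1 = ∅ then 1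
          else if u.1 ∪ v.1 = Finset.univ then 3 else 2) := by
  rw [subGraph_dist]
  by_cases h1 : u = v
  · simp [h1, congrArg Subtype.val h1]
  · have h1' : ¬ u.1 = v.1 := fun h => h1 (Subtype.ext h)
    by_cases h2 : u.1 ∩ v.1 = ∅ <;> by_cases h3 : u.1 ∪ v.1 = Finset.univ <;>
      simp [h1, h1', h2, h3]

lemma dist_sq_cast_eq {k : ℕ} (u v : SubVert k) :
    ((subGraph k).dist u v : ℚ) ^ 2
      = (if u.1 = v.1 then 0 else if u.1 ∩ v.1 = ∅ then 1
          else if u.1 ∪ v.1 = Finset.univ then 9 else 4) := by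
  rw [dist_cast_eq]
  split_ifs <;> norm_num

lemma subvert_sum_dist {k : ℕ} (hk : 2 ≤ k) :
    ∑ u : SubVert k, ∑ v : SubVert k, ((subGraph k).dist u v : ℚ)
    = 2 * ((2 : ℚ) ^ k - 2) ^ 2 - 3 * ((2 : ℚ) ^ k - 2) := by
  have h := subvert_master hk 1 2 3
  rw [card_Pk (by omega)] at h
  calc ∑ u : SubVert k, ∑ v : SubVert k, ((subGraph k).dist u v : ℚ)
      = ∑ u : SubVert k, ∑ v : SubVert k,
        (if u.1 = v.1 then 0 else if u.1 ∩ v.1 = ∅ then 1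
          else if u.1 ∪ v.1 = Finset.univ then 3 else 2) :=
        Finset.sum_congr rfl fun u _ => Finset.sum_congr rfl fun v _ => dist_cast_eq u v
    _ = _ := by rw [h]; ring

lemma subvert_sum_dist_sq {k : ℕ} (hk : 2 ≤ k) :
    ∑ u : SubVert k, ∑ v : SubVert k, ((subGraph k).dist u v : ℚ) ^ 2
    = 4 * ((2 : ℚ) ^ k - 2) ^ 2 - 11 * ((2 : ℚ) ^ k - 2)
      + 2 * ((3 : ℚ) ^ k - 2 ^ k - 1) := by
  have h := subvert_master hk 1 4 9
  rw [card_Pk (by omega)] at h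
  calc ∑ u : SubVert k, ∑ v : SubVert k, ((subGraph k).dist u v : ℚ) ^ 2
      = ∑ u : SubVert k, ∑ v : SubVert k,
        (if u.1 = v.1 then 0 else if u.1 ∩ v.1 = ∅ then 1
          else if u.1 ∪ v.1 = Finset.univ then 9 else 4) :=
        Finset.sum_congr rfl fun u _ => Finset.sum_congr rfl fun v _ => dist_sq_cast_eq u v
    _ = _ := by rw [h]; ring


section Bridge
variable {ι : Type*} [Fintype ι] [DecidableEq ι] {F : ι → Type*} [∀ i, Field (F i)]

lemma isEssentialIdeal_idealOf_iff (S : Finset ι) :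
    IsEssentialIdeal (idealOf (F := F) S) ↔ S = ∅ := by
  constructor
  · intro h
    by_contra hS
    have hbot : idealOf (F := F) Sᶜ ≠ ⊥ := by
      rw [← idealOf_univ]
      intro hc
      have hc2 := idealOf_injective hc
      rw [Finset.compl_eq_univ_iff] at hc2
      exact hS hc2
    apply h (idealOf Sᶜ) hbot
    rw [idealOf_inf, Finset.union_compl, idealOf_univ]
  · rintro rfl
    rw [idealOf_empty]
    intro J hJ
    rwa [top_inf_eq]

end Bridge


/-- For `n = p 0 * ⋯ * p (k-1)` a product of `k ≥ 2` distinct primes, the Wiener index of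
the essential ideal graph of `ZMod n` equals
`(1/2) Σ_{t=1}^{k-1} C(k,t) [2^{k+1} + 2^t - 2^{k-t} - 7]`, and its hyper-Wiener index
equals `(1/2) Σ_{t=1}^{k-1} C(k,t) [3·2^k - 2·2^{k-t} + 3·2^t - 13]`. -/
theorem wiener_essentialIdealGraph_squarefree (k : ℕ) (hk : 2 ≤ k)
    (p : Fin k → ℕ) (hp : ∀ i, (p i).Prime) (hinj : Function.Injective p)
    (n : ℕ) (hn : n = ∏ i, p i) [NeZero n] :
    essWiener n =
      (∑ t ∈ Finset.Icc 1 (k - 1),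
        (k.choose t : ℚ) * (2 ^ (k + 1) + 2 ^ t - 2 ^ (k - t) - 7)) / 2 ∧
    essHyperWiener n =
      (∑ t ∈ Finset.Icc 1 (k - 1),
        (k.choose t : ℚ) * (3 * 2 ^ k - 2 * 2 ^ (k - t) + 3 * 2 ^ t - 13)) / 2 := by
  subst hn
  haveI : ∀ i, Fact (p i).Prime := fun i => ⟨hp i⟩
  have hco : Pairwise (Function.onFun Nat.Coprime p) := fun i j hij =>
    (Nat.coprime_primes (hp i) (hp j)).mpr (fun h => hij (hinj h))
  let e : ZMod (∏ i, p i) ≃+* ∀ i, ZMod (p i) := ZMod.prodEquivPi p hco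
  let Ψ : Ideal (∀ i, ZMod (p i)) ≃o Ideal (ZMod (∏ i, p i)) :=
    Ideal.relIsoOfBijective (e : ZMod (∏ i, p i) →+* ∀ i, ZMod (p i)) e.bijective
  set Φ : Finset (Fin k) → Ideal (ZMod (∏ i, p i)) :=
    fun S => Ψ (idealOf (F := fun i => ZMod (p i)) S) with hΦ
  have hΨbot : ∀ x, Ψ x = ⊥ ↔ x = ⊥ := fun x => by
    rw [← Ψ.map_bot, Ψ.injective.eq_iff]
  have hΨtop : ∀ x, Ψ x = ⊤ ↔ x = ⊤ := fun x => by
    rw [← Ψ.map_top, Ψ.injective.eq_iff]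
  have hbotiff : ∀ S, Φ S = ⊥ ↔ S = Finset.univ := by
    intro S
    rw [hΦ, hΨbot, ← idealOf_univ (F := fun i => ZMod (p i)), idealOf_injective.eq_iff]
  have htopiff : ∀ S, Φ S = ⊤ ↔ S = ∅ := by
    intro S
    rw [hΦ, hΨtop, ← idealOf_empty (F := fun i => ZMod (p i)), idealOf_injective.eq_iff]
  set θ : SubVert k → EssVert (∏ i, p i) := fun S =>
    ⟨Φ S.1, fun hc => S.2.2 ((hbotiff S.1).mp hc), fun hc => S.2.1 ((htopiff S.1).mp hc)⟩
    with hθ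
  have hθbij : Function.Bijective θ := by
    constructor
    · intro u v huv
      apply Subtype.ext
      have h1 : Φ u.1 = Φ v.1 := congrArg Subtype.val huv
      exact idealOf_injective (Ψ.injective h1)
    · intro I
      obtain ⟨S, hS⟩ := idealOf_surjective (F := fun i => ZMod (p i)) (Ψ.symm I.1)
      have hΦS : Φ S = I.1 := by
        show Ψ (idealOf S) = I.1
        rw [← hS, Ψ.apply_symm_apply]
      have hS1 : S ≠ ∅ := by
        intro hc
        apply I.2.2
        rw [← hΦS, htopiff, hc]
      have hS2 : S ≠ Finset.univ := by
        intro hc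
        apply I.2.1
        rw [← hΦS, hbotiff, hc]
      exact ⟨⟨S, hS1, hS2⟩, Subtype.ext hΦS⟩
  set Θ : SubVert k ≃ EssVert (∏ i, p i) := Equiv.ofBijective θ hθbij with hΘ
  have hAdj : ∀ u v : SubVert k,
      (essentialIdealGraph (ZMod (∏ i, p i))).Adj (Θ u) (Θ v) ↔ (subGraph k).Adj u v := by
    intro u v
    have hsup : (Θ u).1 ⊔ (Θ v).1 = Φ (u.1 ∩ v.1) := by
      show Ψ (idealOf u.1) ⊔ Ψ (idealOf v.1) = Ψ (idealOf (u.1 ∩ v.1))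
      rw [← Ψ.map_sup, idealOf_sup]
    have hess : IsEssentialIdeal ((Θ u).1 ⊔ (Θ v).1) ↔ u.1 ∩ v.1 = ∅ := by
      rw [hsup]
      show IsEssentialIdeal (Ψ (idealOf (u.1 ∩ v.1))) ↔ _
      rw [isEssentialIdeal_map_orderIso, isEssentialIdeal_idealOf_iff]
    constructor
    · rintro ⟨hne, he⟩
      exact ⟨fun hc => hne (congrArg Θ hc), hess.mp he⟩
    · rintro ⟨hne, he⟩
      exact ⟨fun hc => hne (Θ.injective hc), hess.mpr he⟩
  let φ : subGraph k ≃g essentialIdealGraph (ZMod (∏ i, p i)) :=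
    { toEquiv := Θ, map_rel_iff' := fun {u v} => hAdj u v }
  have hdist : ∀ u v : SubVert k,
      (essentialIdealGraph (ZMod (∏ i, p i))).dist (Θ u) (Θ v) = (subGraph k).dist u v :=
    fun u v => iso_dist_eq φ u v
  have hsum : ∀ G : ℕ → ℚ,
      (∑ u : EssVert (∏ i, p i), ∑ v : EssVert (∏ i, p i),
        G ((essentialIdealGraph (ZMod (∏ i, p i))).dist u v))
      = ∑ u : SubVert k, ∑ v : SubVert k, G ((subGraph k).dist u v) := by
    intro G
    rw [← Equiv.sum_comp Θ (fun u => ∑ v : EssVert (∏ i, p i),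
      G ((essentialIdealGraph (ZMod (∏ i, p i))).dist u v))]
    apply Finset.sum_congr rfl
    intro u _
    rw [← Equiv.sum_comp Θ (fun v =>
      G ((essentialIdealGraph (ZMod (∏ i, p i))).dist (Θ u) v))]
    apply Finset.sum_congr rfl
    intro v _
    rw [hdist u v]
  have hW : essWiener (∏ i, p i)
      = (2 * ((2 : ℚ) ^ k - 2) ^ 2 - 3 * ((2 : ℚ) ^ k - 2)) / 2 := by
    unfold essWiener
    rw [hsum (fun d => (d : ℚ)), subvert_sum_dist hk]
  have hSq : (∑ u : EssVert (∏ i, p i), ∑ v : EssVert (∏ i, p i),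
      ((essentialIdealGraph (ZMod (∏ i, p i))).dist u v : ℚ) ^ 2)
      = 4 * ((2 : ℚ) ^ k - 2) ^ 2 - 11 * ((2 : ℚ) ^ k - 2)
        + 2 * ((3 : ℚ) ^ k - 2 ^ k - 1) := by
    rw [hsum (fun d => (d : ℚ) ^ 2), subvert_sum_dist_sq hk]
  have hr1 : ∑ t ∈ Finset.Icc 1 (k - 1),
      (k.choose t : ℚ) * (2 ^ (k + 1) + 2 ^ t - 2 ^ (k - t) - 7)
      = ((2 : ℚ) ^ k - 2) * (2 * 2 ^ k - 7) := by
    have hexp : ∀ t ∈ Finset.Icc 1 (k - 1),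
        (k.choose t : ℚ) * (2 ^ (k + 1) + 2 ^ t - 2 ^ (k - t) - 7)
        = ((2 ^ (k + 1) - 7) * (k.choose t : ℚ) + (k.choose t : ℚ) * 2 ^ t)
          - (k.choose t : ℚ) * 2 ^ (k - t) := by
      intro t _
      ring
    rw [Finset.sum_congr rfl hexp, Finset.sum_sub_distrib, Finset.sum_add_distrib,
      ← Finset.mul_sum, sum_choose_Icc hk, sum_choose_pow_Icc hk, sum_choose_pow_rev_Icc hk,
      pow_succ]
    ring
  have hr2 : ∑ t ∈ Finset.Icc 1 (k - 1),
      (k.choose t : ℚ) * (3 * 2 ^ k - 2 * 2 ^ (k - t) + 3 * 2 ^ t - 13)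
      = ((2 : ℚ) ^ k - 2) * (3 * 2 ^ k - 13) + ((3 : ℚ) ^ k - 1 - 2 ^ k) := by
    have hexp : ∀ t ∈ Finset.Icc 1 (k - 1),
        (k.choose t : ℚ) * (3 * 2 ^ k - 2 * 2 ^ (k - t) + 3 * 2 ^ t - 13)
        = ((3 * 2 ^ k - 13) * (k.choose t : ℚ) + 3 * ((k.choose t : ℚ) * 2 ^ t))
          - 2 * ((k.choose t : ℚ) * 2 ^ (k - t)) := by
      intro t _
      ring
    rw [Finset.sum_congr rfl hexp, Finset.sum_sub_distrib, Finset.sum_add_distrib,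
      ← Finset.mul_sum, ← Finset.mul_sum, ← Finset.mul_sum, sum_choose_Icc hk,
      sum_choose_pow_Icc hk, sum_choose_pow_rev_Icc hk]
    ring
  constructor
  · rw [hW, hr1]
    ring
  · unfold essHyperWiener
    rw [hW, hSq, hr2]
    ring
end
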